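/- arXiv:1509.04880 — 2 statements merged into one kernel-verified Lean document; each statement's English description precedes it below -/
import Mathlib

section
/- Let G be a 3-edge-connected graph, (T, X) a tree-cut decomposition of G with internal width at most 2w, and t a leaf of T with |X_t| ≥ 2w. Suppose (T*, X*) is a star tree-cut decomposition of G[X_t] with central node t_c and ℓ leaves such that its internal width is at most w, |X*_{t_c}| + ℓ ≤ w, and for every leaf node s of T*, Σ_{x ∈ ∂_G(X_t) ∩ X*_s} |δ_G({x}, V(G)∖X_t)| ≤ w. Then the tree-cut decomposition (T̃, X̃) obtained by replacing the leaf t of T by the star T* (attaching t_c to the former neighbor of t, and replacing bag X_t by the bags of X*) has internal width at most 2w, and has strictly more non-empty bags than (T, X). -/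
open scoped Classical

noncomputable section

/-- A multigraph on vertex type `V`: a set of vertices together with a multiset of
(undirected, loopless) edges, parallel edges being allowed. -/
structure MGraph (V : Type) where
  verts : Set V
  edges : Multiset (Sym2 V)

namespace MGraph

variable {V : Type}

/-- The degree of a vertex: the number of incident edges, with multiplicity. -/
def degree (G : MGraph V) (x : V) : ℕ :=
  (G.edges.filter (fun e => x ∈ e)).card

/-- The set of neighbours of a vertex. -/
def nbrSet (G : MGraph V) (x : V) : Set V :=
  {y | y ≠ x ∧ s(x, y) ∈ G.edges}

/-- `δ_G(A,B)`: the multiset of edges of `G` with one endpoint in `A` and the other in `B`. -/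
def cut (G : MGraph V) (A B : Set V) : Multiset (Sym2 V) :=
  G.edges.filter (fun e => ∃ a ∈ A, ∃ b ∈ B, e = s(a, b))

/-- Adjacency in a multigraph. -/
def Adj (G : MGraph V) (x y : V) : Prop := x ≠ y ∧ s(x, y) ∈ G.edges

/-- Connectivity of a multigraph. -/
def Connected (G : MGraph V) : Prop :=
  G.verts.Nonempty ∧ ∀ x ∈ G.verts, ∀ y ∈ G.verts, Relation.ReflTransGen G.Adj x y

/-- Deleting a (multi)set of edges from a multigraph. -/
def deleteEdges (G : MGraph V) (F : Multiset (Sym2 V)) : MGraph V :=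
  ⟨G.verts, G.edges - F⟩

/-- A multigraph is 3-edge-connected if it is connected and remains connected after
removal of any set of at most 2 edges. -/
def ThreeEdgeConnected (G : MGraph V) : Prop :=
  G.Connected ∧ ∀ F : Multiset (Sym2 V), F ≤ G.edges → Multiset.card F ≤ 2 →
    (G.deleteEdges F).Connected

/-- The induced sub-multigraph on a set of vertices. -/
def induce (G : MGraph V) (S : Set V) : MGraph V :=
  ⟨G.verts ∩ S, G.edges.filter (fun e => ∀ v ∈ e, v ∈ S)⟩

/-- `∂_G(S)`: the vertices of `S` having a neighbour outside of `S`. -/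
def boundary (G : MGraph V) (S : Set V) : Set V :=
  {x | x ∈ S ∧ ∃ u, u ∈ G.verts ∧ u ∉ S ∧ s(x, u) ∈ G.edges}

/-- `|δ_G({x}, V(G)∖S)|`: the number of edges from `x` to the outside of `S`. -/
def bWeight (G : MGraph V) (S : Set V) (x : V) : ℕ :=
  (G.edges.filter (fun e => ∃ u, u ∈ G.verts ∧ u ∉ S ∧ e = s(x, u))).card

/-- Dissolving step used in the definition of the 3-center of `(G, X)`: a vertex `x ∉ X`
of degree 2 with exactly two (distinct) neighbours `y, z` is removed and the edge `yz`
is added (increasing its multiplicity if it is already present). -/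
def DissolveStep (X : Set V) (G G' : MGraph V) : Prop :=
  ∃ x y z, x ∉ X ∧ x ∈ G.verts ∧ y ≠ z ∧ x ≠ y ∧ x ≠ z ∧
    G.edges.filter (fun e => x ∈ e) = {s(x, y), s(x, z)} ∧
    G' = ⟨G.verts \ {x}, G.edges.filter (fun e => x ∉ e) + {s(y, z)}⟩

/-- Deletion step used in the definition of the 3-center of `(G, X)`: a vertex `x ∉ X`
of degree at most 2 with at most one neighbour is removed. -/
def DeleteStep (X : Set V) (G G' : MGraph V) : Prop :=
  ∃ x, x ∉ X ∧ x ∈ G.verts ∧ G.degree x ≤ 2 ∧ (G.nbrSet x).Subsingleton ∧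
    G' = ⟨G.verts \ {x}, G.edges.filter (fun e => x ∉ e)⟩

def CenterStep (X : Set V) (G G' : MGraph V) : Prop :=
  DissolveStep X G G' ∨ DeleteStep X G G'

/-- `H` is a 3-center of `(G, X)` if it is obtained from `G` by repeatedly applying
dissolve/delete steps until none applies. -/
def IsThreeCenter (X : Set V) (G H : MGraph V) : Prop :=
  Relation.ReflTransGen (CenterStep X) G H ∧ ∀ H', ¬ CenterStep X H H'

/-- `(T, X)` is a tree-cut decomposition of `G`: `T` is a tree and the bags `X t` are
pairwise disjoint with union `V(G)`. -/
def IsTCD {ι : Type} (G : MGraph V) (T : SimpleGraph ι) (X : ι → Set V) : Prop :=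
  T.IsTree ∧ (Pairwise fun t t' => Disjoint (X t) (X t')) ∧ (⋃ t, X t) = G.verts

/-- Given a tree edge `{a,b}` of `T`, the union of the bags over the component of
`T - {a,b}` containing `a`. -/
def edgeSide {ι : Type} (T : SimpleGraph ι) (X : ι → Set V) (a b : ι) : Set V :=
  ⋃ t ∈ {t | (T.deleteEdges {s(a, b)}).Reachable a t}, X t

/-- The adhesion `δ^T({a,b})` of a tree edge of a tree-cut decomposition. -/
def adhesion (G : MGraph V) {ι : Type} (T : SimpleGraph ι) (X : ι → Set V) (a b : ι) :
    Multiset (Sym2 V) :=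
  G.cut (edgeSide T X a b) (edgeSide T X b a)

/-- `a` and `b` are connected in `T - t`. -/
def ReachAvoid {ι : Type} (T : SimpleGraph ι) (t a b : ι) : Prop :=
  ∃ (ha : a ∈ ({t}ᶜ : Set ι)) (hb : b ∈ ({t}ᶜ : Set ι)),
    (T.induce ({t}ᶜ : Set ι)).Reachable ⟨a, ha⟩ ⟨b, hb⟩

/-- The neighbour of `t` indexing the component of `T - t` whose bags contain `v`. -/
def compOf {ι : Type} (T : SimpleGraph ι) (X : ι → Set V) (t : ι) (v : V) : ι :=
  if h : ∃ s, T.Adj t s ∧ ∃ t', v ∈ X t' ∧ ReachAvoid T t s t' then h.choose else t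

/-- The identification map used in the definition of the torso at `t`. -/
def torsoMap {ι : Type} (T : SimpleGraph ι) (X : ι → Set V) (t : ι) (v : V) : V ⊕ ι :=
  if v ∈ X t then Sum.inl v else Sum.inr (compOf T X t v)

/-- The torso of `G` at node `t` of the tree-cut decomposition `(T, X)`: each non-empty
union of bags over a component of `T - t` is identified to a single vertex (components
are indexed by the corresponding neighbour of `t`); parallel edges are kept, loops
are discarded. -/
def torso {ι : Type} (G : MGraph V) (T : SimpleGraph ι) (X : ι → Set V) (t : ι) :
    MGraph (V ⊕ ι) :=
  ⟨Sum.inl '' (X t) ∪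
     Sum.inr '' {s | T.Adj t s ∧ ∃ t' v, v ∈ X t' ∧ ReachAvoid T t s t'},
   (G.edges.map (Sym2.map (torsoMap T X t))).filter (fun e => ¬ e.IsDiag)⟩

/-- The width of the tree-cut decomposition `(T, X)` of `G` is at most `w`: all
adhesions have at most `w` edges and all 3-centers of torsos have at most `w` vertices. -/
def WidthLE {ι : Type} (G : MGraph V) (T : SimpleGraph ι) (X : ι → Set V) (w : ℕ) : Prop :=
  (∀ a b, T.Adj a b → Multiset.card (adhesion G T X a b) ≤ w) ∧
  ∀ t H, IsThreeCenter (Sum.inl '' (X t)) (torso G T X t) H → H.verts.ncard ≤ w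

/-- `G` has a tree-cut decomposition of width at most `w`. -/
def tcwLE (G : MGraph V) (w : ℕ) : Prop :=
  ∃ (ι : Type) (_ : Finite ι) (T : SimpleGraph ι) (X : ι → Set V),
    IsTCD G T X ∧ WidthLE G T X w

/-- The tree-cut width of a multigraph. -/
def tcw (G : MGraph V) : ℕ := sInf {w | tcwLE G w}

/-- A leaf of a tree: a node with exactly one neighbour. -/
def IsLeaf {ι : Type} (T : SimpleGraph ι) (t : ι) : Prop := ∃! s, T.Adj t s

/-- The internal width of `(T, X)` is at most `w`: all adhesions are at most `w` and the
3-center torso sizes of all *non-leaf* nodes are at most `w`. -/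
def InWidthLE {ι : Type} (G : MGraph V) (T : SimpleGraph ι) (X : ι → Set V) (w : ℕ) : Prop :=
  (∀ a b, T.Adj a b → Multiset.card (adhesion G T X a b) ≤ w) ∧
  ∀ t, ¬ IsLeaf T t →
    ∀ H, IsThreeCenter (Sum.inl '' (X t)) (torso G T X t) H → H.verts.ncard ≤ w

/-- A tree-cut decomposition is non-trivial if at least two bags are non-empty. -/
def NonTrivial {ι : Type} (X : ι → Set V) : Prop :=
  ∃ t t', t ≠ t' ∧ (X t).Nonempty ∧ (X t').Nonempty

/-- Identifying the vertex set `S` of `G` into the single vertex `v₀ ∈ S`: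
edges inside `S` are deleted (loops discarded), parallel edges are kept. -/
def collapse (G : MGraph V) (S : Set V) (v₀ : V) : MGraph V :=
  ⟨(G.verts \ S) ∪ {v₀},
   (G.edges.map (Sym2.map (fun x => if x ∈ S then v₀ else x))).filter (fun e => ¬ e.IsDiag)⟩

/-- One step of taking an immersion: deleting an edge, deleting a vertex, or lifting a
pair of edges `{x,v}, {v,y}` to the single edge `{x,y}`. -/
def ImmStep (G G' : MGraph V) : Prop :=
  (∃ e ∈ G.edges, G' = ⟨G.verts, G.edges.erase e⟩) ∨
  (∃ v ∈ G.verts, G' = ⟨G.verts \ {v}, G.edges.filter (fun e => v ∉ e)⟩) ∨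
  (∃ x v y, x ≠ v ∧ y ≠ v ∧ x ≠ y ∧ s(x, v) ∈ G.edges ∧ s(v, y) ∈ G.edges.erase s(x, v) ∧
    G' = ⟨G.verts, s(x, y) ::ₘ ((G.edges.erase s(x, v)).erase s(v, y))⟩)

/-- `H` is an immersion of `G`. -/
def IsImmersion (H G : MGraph V) : Prop := Relation.ReflTransGen ImmStep G H

end MGraph

/-- The multigraph associated to a simple graph. -/
def SimpleGraph.toMGraph {α : Type} [Fintype α] (G : SimpleGraph α) : MGraph α :=
  ⟨Set.univ, (Set.toFinite G.edgeSet).toFinset.val⟩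

/-- The star with `ℓ` leaves: center `none`, leaves `some i`. -/
def starGraph (ℓ : ℕ) : SimpleGraph (Option (Fin ℓ)) :=
  SimpleGraph.fromRel (fun a _ => a = none)

/-- The graph `H_w`: `w` disjoint cliques `Q_i = {(i,j) : j}` of size `w`, together with
the cross edges `{(i,j),(j,i)}` for `i ≠ j`. -/
def Hw (w : ℕ) : SimpleGraph (Fin w × Fin w) :=
  SimpleGraph.fromRel (fun p q => p.1 = q.1 ∨ (q.1 = p.2 ∧ q.2 = p.1))

/-- Two vertex sets touch in `G`: they intersect or are joined by an edge. -/
def Touch {α : Type} (G : SimpleGraph α) (A B : Set α) : Prop :=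
  (A ∩ B).Nonempty ∨ ∃ a ∈ A, ∃ b ∈ B, G.Adj a b

/-- A bramble: a collection of (vertex sets of) connected subgraphs pairwise touching. -/
def IsBramble {α : Type} (G : SimpleGraph α) (ℬ : Set (Set α)) : Prop :=
  (∀ A ∈ ℬ, (G.induce A).Connected) ∧ ∀ A ∈ ℬ, ∀ B ∈ ℬ, Touch G A B

/-- `B(i,Z) = {(i,j) : j ∈ Z} ∪ {(j,i) : j ∈ Z}`. -/
def Bset (w : ℕ) (i : Fin w) (Z : Finset (Fin w)) : Set (Fin w × Fin w) :=
  {p | (p.1 = i ∧ p.2 ∈ Z) ∨ (p.2 = i ∧ p.1 ∈ Z)}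

/-- The bramble `B_w = {H_w[B(i,Z)] : i ∈ [w], Z ⊆ [w]∖{i}, |Z| = w/2}`. -/
def Bfam (w : ℕ) : Set (Set (Fin w × Fin w)) :=
  {A | ∃ (i : Fin w) (Z : Finset (Fin w)), i ∉ Z ∧ Z.card = w / 2 ∧ A = Bset w i Z}

/-- `(T, Y)` is a tree decomposition of the simple graph `G`. -/
def IsTreeDecomp {α ι : Type} (G : SimpleGraph α) (T : SimpleGraph ι) (Y : ι → Set α) : Prop :=
  T.IsTree ∧ (∀ v, ∃ x, v ∈ Y x) ∧
  (∀ u v, G.Adj u v → ∃ x, u ∈ Y x ∧ v ∈ Y x) ∧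
  (∀ v, (T.induce {x | v ∈ Y x}).Connected)

/-- `G` has treewidth at most `k`. -/
def twLE {α : Type} (G : SimpleGraph α) (k : ℕ) : Prop :=
  ∃ (ι : Type) (_ : Finite ι) (T : SimpleGraph ι) (Y : ι → Set α),
    IsTreeDecomp G T Y ∧ ∀ x, (Y x).ncard ≤ k + 1

end
noncomputable section
open scoped Classical

namespace MGraph

variable {V : Type}

/-- The weight function `γ'` of Lemma 4: `γ'(v) = |δ_G({v}, V(G)∖S)|` for `v ∈ S`,
and `0` otherwise. -/
def gammaExt (G : MGraph V) (S : Set V) (v : V) : ℕ :=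
  if v ∈ S then G.bWeight S v else 0

/-- `γ'(T_b)` where `T_b` is the component of `T - {a,b}` containing `b`. -/
def sideWeight (G : MGraph V) {ι : Type} (T : SimpleGraph ι) (X : ι → Set V)
    (S : Set V) (a b : ι) : ℕ :=
  ∑ᶠ t ∈ {t | (T.deleteEdges {s(a, b)}).Reachable b t}, ∑ᶠ v ∈ X t, G.gammaExt S v

/-- The edge `{x,y}` of `T` is oriented from `x` to `y` by Rule 1 (`γ'(T_y) > w`) or by
Rule 2 (`S` avoids all the bags on the `x`-side). -/
def ruleOrient (G : MGraph V) {ι : Type} (T : SimpleGraph ι) (X : ι → Set V)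
    (S : Set V) (w : ℕ) (x y : ι) : Prop :=
  w < G.sideWeight T X S x y ∨ S ∩ edgeSide T X x y = ∅

end MGraph

/-- The tree obtained from `T` by attaching `ℓ` new leaves to the node `t`
(`t` plays the role of the center of the star replacing the former leaf `t`). -/
def refineTree {ι : Type} (T : SimpleGraph ι) (t : ι) (ℓ : ℕ) : SimpleGraph (ι ⊕ Fin ℓ) :=
  SimpleGraph.fromRel (fun a b =>
    (∃ i j, a = Sum.inl i ∧ b = Sum.inl j ∧ T.Adj i j) ∨
    (a = Sum.inl t ∧ ∃ i, b = Sum.inr i))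

/-- The bags of the refined decomposition: the bag of the former leaf `t` is replaced by
the central bag `Xs none` of the star decomposition, the new leaves get the leaf bags. -/
def refineBags {V ι : Type} (X : ι → Set V) (t : ι) {ℓ : ℕ}
    (Xs : Option (Fin ℓ) → Set V) : ι ⊕ Fin ℓ → Set V :=
  fun s => Sum.rec (fun a => if a = t then Xs none else X a) (fun i => Xs (some i)) s

/-- `w = n³/2 + k`, the target width in the Min Bisection reduction. -/
def bisectW (n k : ℕ) : ℕ := n ^ 3 / 2 + k

/-- The vertex type of the graph `G'` of the Min Bisection reduction:
`V = Fin n`, `Q = Fin (w-2)`, and a set `C_{x,y}` of `w+1` vertices for each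
(unordered) pair `x < y` of vertices of `Q`. -/
abbrev BisV (n w : ℕ) : Type :=
  Fin n ⊕ (Fin (w - 2) ⊕ (({p : Fin (w - 2) × Fin (w - 2) // p.1 < p.2}) × Fin (w + 1)))

/-- The (one-directional) edge relation of `G'`: `V` induces a copy of `G`; each vertex
`a ∈ V` is adjacent to the `n²` vertices `f a ⊆ Q`; every vertex of `C_{x,y}` is
adjacent to both `x` and `y`. -/
def bisectR {n : ℕ} (G : SimpleGraph (Fin n)) (w : ℕ) (f : Fin n → Finset (Fin (w - 2))) :
    BisV n w → BisV n w → Prop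
  | Sum.inl a, Sum.inl b => G.Adj a b
  | Sum.inl a, Sum.inr (Sum.inl q) => q ∈ f a
  | Sum.inr (Sum.inl q), Sum.inr (Sum.inr c) => q = c.1.1.1 ∨ q = c.1.1.2
  | _, _ => False

/-- The graph `G'` of the Min Bisection reduction. -/
def bisectG {n : ℕ} (G : SimpleGraph (Fin n)) (w : ℕ) (f : Fin n → Finset (Fin (w - 2))) :
    SimpleGraph (BisV n w) :=
  SimpleGraph.fromRel (bisectR G w f)

/-- The multiset of edges used by a walk, given as its list of vertices. -/
def walkEdges {V : Type} (l : List V) : Multiset (Sym2 V) :=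
  ↑((l.zip l.tail).map fun p => s(p.1, p.2))

end

noncomputable section
open scoped Classical
open MGraph

/-!
Let `π : ι ⊕ Fin ℓ → ι` fold the new leaves back onto `t`. The bags over `π⁻¹(c)` partition
`X c`, and reachability in the refined tree, also after deleting an old edge or avoiding an old
node `s ≠ t`, is reachability of the `π`-images in `T` after the same deletion. So every old edge
keeps its two sides, hence its adhesion, and every old node `s ≠ t` keeps its torso up to renaming
the component vertices, hence the sizes of its 3-centers. The new edge to the star leaf `i` cuts
off `X*_i`: an edge leaving `X*_i` either stays inside `G[X_t]`, where the star adhesion counts it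
(at most `w`), or leaves `X_t` at a boundary vertex of `X*_i`, where the weight sum counts it (at
most `w`). The torso at the new center has the `|X*_{t_c}|` bag vertices and at most `ℓ + 1`
component vertices (the former neighbour of `t` and the `ℓ` leaves), so its 3-centers have at
most `w + 1 ≤ 2w` vertices. Finally the single bag `X_t` is replaced by at least two non-empty
star bags.
-/

namespace SimpleGraph

variable {α β : Type} {G : SimpleGraph α} {H : SimpleGraph β}

theorem reachable_iff_of_retraction (f : α → β) (g : H →g G)
    (hf : ∀ x y, G.Adj x y → f x = f y ∨ H.Adj (f x) (f y))
    (hgf : ∀ x, G.Reachable x (g (f x))) {x y : α} :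
    G.Reachable x y ↔ H.Reachable (f x) (f y) := by
  refine ⟨fun h => ?_, fun h => ?_⟩
  · rw [reachable_iff_reflTransGen] at h ⊢
    refine Relation.ReflTransGen.lift' f (fun a b hab => ?_) _ _ h
    rcases hf a b hab with e | e
    · exact show Relation.ReflTransGen H.Adj (f a) (f b) from e ▸ .refl
    · exact .single e
  · exact (hgf x).trans ((h.map g).trans (hgf y).symm)

theorem eq_of_reachable_deleteEdges {u v x : α} (hv : ∀ y, G.Adj v y → y = u)
    (h : (G.deleteEdges {s(v, u)}).Reachable v x) : x = v := by
  obtain ⟨p⟩ := h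
  cases p with
  | nil => rfl
  | cons hadj _ =>
    rw [deleteEdges_adj] at hadj
    exact absurd (hv _ hadj.1 ▸ rfl) hadj.2

theorem Preconnected.reachable_deleteEdges_or (hG : G.Preconnected) (a b x : α) :
    (G.deleteEdges {s(a, b)}).Reachable a x ∨ (G.deleteEdges {s(a, b)}).Reachable b x := by
  have h := (reachable_iff_reflTransGen a x).mp (hG a x)
  induction h with
  | refl => exact .inl .rfl
  | @tail y z _ hyz ih =>
    by_cases he : s(y, z) = s(a, b)
    · rcases Sym2.eq_iff.mp he with ⟨-, rfl⟩ | ⟨-, rfl⟩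
      · exact .inr .rfl
      · exact .inl .rfl
    · have hyz' : (G.deleteEdges {s(a, b)}).Adj y z := deleteEdges_adj.mpr ⟨hyz, he⟩
      exact ih.imp (·.trans hyz'.reachable) (·.trans hyz'.reachable)

theorem IsAcyclic.not_reachable_deleteEdges (hG : G.IsAcyclic) {a b : α} (h : G.Adj a b) :
    ¬ (G.deleteEdges {s(a, b)}).Reachable a b :=
  isBridge_iff.mp (isAcyclic_iff_forall_adj_isBridge.mp hG h)

end SimpleGraph

namespace Multiset

variable {α β : Type} (m : Multiset α)

theorem card_filter_le_card_filter_of_forall_mem {p q : α → Prop} [DecidablePred p]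
    [DecidablePred q] (h : ∀ e ∈ m, p e → q e) : card (m.filter p) ≤ card (m.filter q) := by
  rw [filter_congr fun e he => (and_iff_left_of_imp (h e he)).symm]
  exact card_le_card (monotone_filter_right m fun _ => And.right)

theorem card_filter_or_le (p q : α → Prop) [DecidablePred p] [DecidablePred q] :
    card (m.filter fun e => p e ∨ q e) ≤ card (m.filter p) + card (m.filter q) := by
  rw [← card_add, filter_add_filter, card_add]
  exact Nat.le_add_right _ _

theorem card_filter_exists_le (F : Finset β) (q : β → α → Prop) :
    card (m.filter fun e => ∃ x ∈ F, q x e) ≤ ∑ x ∈ F, card (m.filter (q x)) := by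
  induction F using Finset.induction_on with
  | empty => simp
  | insert a F ha ih =>
    simp only [Finset.exists_mem_insert, Finset.sum_insert ha]
    exact (card_filter_or_le m _ _).trans (Nat.add_le_add_left ih _)

theorem filter_not_isDiag_map_sym2_map [DecidableEq α] [DecidableEq β] {φ : α → β}
    (hφ : φ.Injective) (E : Multiset (Sym2 α)) :
    (E.map (Sym2.map φ)).filter (¬ ·.IsDiag) = (E.filter (¬ ·.IsDiag)).map (Sym2.map φ) := by
  induction E using Multiset.induction_on with
  | empty => simp
  | cons e E ih => by_cases he : e.IsDiag <;> simp [he, ih, Sym2.isDiag_map hφ]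

end Multiset

theorem Function.Injective.mem_sym2_map_iff {α β : Type} {f : α → β} (hf : f.Injective) {x : α}
    {e : Sym2 α} : f x ∈ Sym2.map f e ↔ x ∈ e := by
  rw [Sym2.mem_map]
  exact ⟨fun ⟨a, ha, h⟩ => hf h ▸ ha, fun h => ⟨x, h, rfl⟩⟩

namespace MGraph

section ReachAvoid

variable {ι : Type} {T : SimpleGraph ι} {t a b c : ι}

theorem ReachAvoid.symm (h : ReachAvoid T t a b) : ReachAvoid T t b a :=
  let ⟨ha, hb, hr⟩ := h; ⟨hb, ha, hr.symm⟩

theorem ReachAvoid.trans (h : ReachAvoid T t a b) (h' : ReachAvoid T t b c) :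
    ReachAvoid T t a c :=
  let ⟨ha, _, hr⟩ := h; let ⟨_, hc, hr'⟩ := h'; ⟨ha, hc, hr.trans hr'⟩

theorem ReachAvoid.reachable_deleteEdges (h : ReachAvoid T t a b) (c : ι) :
    (T.deleteEdges {s(t, c)}).Reachable a b := by
  obtain ⟨ha, hb, hr⟩ := h
  let φ : T.induce ({t}ᶜ : Set ι) →g T.deleteEdges {s(t, c)} :=
    ⟨Subtype.val, fun {x y} hxy => SimpleGraph.deleteEdges_adj.mpr ⟨hxy, fun he => by
      rcases Sym2.eq_iff.mp he with ⟨hx, -⟩ | ⟨-, hy⟩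
      · exact x.2 hx
      · exact y.2 hy⟩⟩
  exact hr.map φ

theorem _root_.SimpleGraph.IsAcyclic.eq_of_reachAvoid (hT : T.IsAcyclic) (ha : T.Adj t a)
    (hb : T.Adj t b) (h : ReachAvoid T t a b) : a = b := by
  by_contra hne
  refine hT.not_reachable_deleteEdges ha ?_
  have hbt : (T.deleteEdges {s(t, a)}).Adj b t := by
    refine SimpleGraph.deleteEdges_adj.mpr ⟨hb.symm, fun he => ?_⟩
    rcases Sym2.eq_iff.mp he with ⟨hbt, -⟩ | ⟨hba, -⟩
    · exact hb.ne hbt.symm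
    · exact hne hba.symm
  exact hbt.reachable.symm.trans (h.reachable_deleteEdges a).symm

end ReachAvoid

theorem compOf_eq {V ι : Type} {T : SimpleGraph ι} {X : ι → Set V} {t s b : ι} {v : V}
    (hT : T.IsAcyclic) (hX : Pairwise fun a b => Disjoint (X a) (X b)) (hs : T.Adj t s)
    (hv : v ∈ X b) (h : ReachAvoid T t s b) : compOf T X t v = s := by
  have hex : ∃ s, T.Adj t s ∧ ∃ t', v ∈ X t' ∧ ReachAvoid T t s t' := ⟨s, hs, b, hv, h⟩
  rw [compOf, dif_pos hex]
  obtain ⟨hs', b', hv', h'⟩ := hex.choose_spec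
  obtain rfl : b' = b := hX.eq (Set.not_disjoint_iff.mpr ⟨v, hv', hv⟩)
  exact hT.eq_of_reachAvoid hs' hs (h'.trans h.symm)

section TreeCut

variable {V ι : Type} {G : MGraph V} {T : SimpleGraph ι} {X : ι → Set V}

theorem IsTCD.subset_verts (h : IsTCD G T X) (t : ι) : X t ⊆ G.verts :=
  h.2.2 ▸ Set.subset_iUnion X t

theorem IsTCD.iUnion_eq_of_induce {ι' : Type} {T' : SimpleGraph ι'} {Y : ι' → Set V} {S : Set V}
    (h : IsTCD (G.induce S) T' Y) (hS : S ⊆ G.verts) : ⋃ j, Y j = S :=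
  h.2.2.trans (Set.inter_eq_right.mpr hS)

theorem cut_comm (A B : Set V) : G.cut A B = G.cut B A :=
  Multiset.filter_congr fun _ _ =>
    ⟨fun ⟨a, ha, b, hb, he⟩ => ⟨b, hb, a, ha, he.trans Sym2.eq_swap⟩,
      fun ⟨a, ha, b, hb, he⟩ => ⟨b, hb, a, ha, he.trans Sym2.eq_swap⟩⟩

theorem adhesion_comm (a b : ι) : adhesion G T X a b = adhesion G T X b a :=
  cut_comm _ _

theorem edgeSide_of_forall_adj_eq {u v : ι} (hv : ∀ y, T.Adj v y → y = u) :
    edgeSide T X v u = X v := by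
  ext x
  simp only [edgeSide, Set.mem_iUnion, Set.mem_ofPred_eq, exists_prop]
  exact ⟨fun ⟨c, hc, hx⟩ => SimpleGraph.eq_of_reachable_deleteEdges hv hc ▸ hx,
    fun hx => ⟨v, .rfl, hx⟩⟩

theorem edgeSide_eq_diff (h : IsTCD G T X) {a b : ι} (hab : T.Adj a b) :
    edgeSide T X a b = G.verts \ edgeSide T X b a := by
  have hsep := h.1.isAcyclic.not_reachable_deleteEdges hab
  ext x
  simp only [edgeSide, Set.mem_sdiff, Set.mem_iUnion, Set.mem_ofPred_eq, exists_prop, not_exists,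
    not_and]
  rw [show s(b, a) = s(a, b) from Sym2.eq_swap]
  constructor
  · rintro ⟨c, hc, hx⟩
    refine ⟨h.subset_verts c hx, fun c' hc' hx' => hsep ?_⟩
    obtain rfl : c = c' := h.2.1.eq (Set.not_disjoint_iff.mpr ⟨x, hx, hx'⟩)
    exact hc.trans hc'.symm
  · rintro ⟨hx, hnot⟩
    obtain ⟨c, hc⟩ := Set.mem_iUnion.mp (h.2.2 ▸ hx)
    rcases h.1.connected.preconnected.reachable_deleteEdges_or a b c with hac | hbc
    · exact ⟨c, hac, hc⟩
    · exact absurd hc (hnot c hbc)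

theorem adhesion_eq_cut_of_forall_adj_eq (h : IsTCD G T X) {u v : ι} (huv : T.Adj u v)
    (hv : ∀ y, T.Adj v y → y = u) : adhesion G T X v u = G.cut (X v) (G.verts \ X v) := by
  rw [adhesion, edgeSide_eq_diff h huv, edgeSide_of_forall_adj_eq hv]

theorem card_cut_le {S A : Set V} (hAS : A ⊆ S) (hA : A.Finite) :
    Multiset.card (G.cut A (G.verts \ A)) ≤
      Multiset.card ((G.induce S).cut A ((G.verts ∩ S) \ A)) +
        ∑ᶠ x ∈ G.boundary S ∩ A, G.bWeight S x := by
  have hB : (G.boundary S ∩ A).Finite := hA.subset Set.inter_subset_right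
  rw [finsum_mem_eq_finite_toFinset_sum _ hB]
  calc Multiset.card (G.cut A (G.verts \ A))
      ≤ Multiset.card (G.edges.filter fun e =>
          ((∃ a ∈ A, ∃ b ∈ (G.verts ∩ S) \ A, e = s(a, b)) ∧ ∀ v ∈ e, v ∈ S) ∨
          ∃ x ∈ hB.toFinset, ∃ u, u ∈ G.verts ∧ u ∉ S ∧ e = s(x, u)) := by
        refine Multiset.card_filter_le_card_filter_of_forall_mem _ ?_
        rintro e he ⟨a, ha, b, ⟨hbV, hbA⟩, rfl⟩
        by_cases hbS : b ∈ S
        · refine .inl ⟨⟨a, ha, b, ⟨⟨hbV, hbS⟩, hbA⟩, rfl⟩, fun v hv => ?_⟩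
          rcases Sym2.mem_iff.mp hv with rfl | rfl
          exacts [hAS ha, hbS]
        · exact .inr ⟨a, hB.mem_toFinset.mpr ⟨⟨hAS ha, b, hbV, hbS, he⟩, ha⟩, b, hbV, hbS, rfl⟩
    _ ≤ _ := Multiset.card_filter_or_le _ _ _
    _ ≤ _ := by
        rw [cut, induce, Multiset.filter_filter]
        exact Nat.add_le_add_left (Multiset.card_filter_exists_le _ _ _) _

end TreeCut

section Relabel

variable {V W : Type} {f : V → W}

def mapG (f : V → W) (G : MGraph V) : MGraph W :=
  ⟨f '' G.verts, G.edges.map (Sym2.map f)⟩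

theorem filter_mem_map_sym2_map (hf : f.Injective) (E : Multiset (Sym2 V)) (x : V) :
    (E.map (Sym2.map f)).filter (f x ∈ ·) = (E.filter (x ∈ ·)).map (Sym2.map f) := by
  simp only [Multiset.filter_map, Function.comp_def, hf.mem_sym2_map_iff]

theorem filter_not_mem_map_sym2_map (hf : f.Injective) (E : Multiset (Sym2 V)) (x : V) :
    (E.map (Sym2.map f)).filter (f x ∉ ·) = (E.filter (x ∉ ·)).map (Sym2.map f) := by
  simp only [Multiset.filter_map, Function.comp_def, hf.mem_sym2_map_iff]

theorem degree_mapG (hf : f.Injective) (G : MGraph V) (x : V) :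
    (mapG f G).degree (f x) = G.degree x := by
  rw [degree, mapG, filter_mem_map_sym2_map hf, Multiset.card_map, degree]

theorem nbrSet_mapG (hf : f.Injective) (G : MGraph V) (x : V) :
    (mapG f G).nbrSet (f x) = f '' G.nbrSet x := by
  ext y
  simp only [nbrSet, mapG, Set.mem_ofPred_eq, Set.mem_image, Multiset.mem_map]
  constructor
  · rintro ⟨hy, e, he, hxy⟩
    obtain ⟨v, rfl⟩ := Sym2.mem_iff_exists.mp (hf.mem_sym2_map_iff.mp (hxy ▸ Sym2.mem_mk_left _ _))
    rcases Sym2.eq_iff.mp hxy with ⟨-, rfl⟩ | ⟨h, -⟩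
    · exact ⟨v, ⟨fun h => hy (h ▸ rfl), he⟩, rfl⟩
    · exact absurd h.symm hy
  · rintro ⟨v, ⟨hvx, he⟩, rfl⟩
    exact ⟨hf.ne hvx, _, he, rfl⟩

theorem mapG_removeVertex (hf : f.Injective) (G : MGraph V) (x : V) :
    mapG f ⟨G.verts \ {x}, G.edges.filter (x ∉ ·)⟩ =
      ⟨(mapG f G).verts \ {f x}, (mapG f G).edges.filter (f x ∉ ·)⟩ := by
  simp only [mapG, Set.image_sdiff hf, Set.image_singleton, filter_not_mem_map_sym2_map hf]

theorem mapG_dissolve (hf : f.Injective) (G : MGraph V) (x y z : V) :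
    mapG f ⟨G.verts \ {x}, G.edges.filter (x ∉ ·) + {s(y, z)}⟩ =
      ⟨(mapG f G).verts \ {f x}, (mapG f G).edges.filter (f x ∉ ·) + {s(f y, f z)}⟩ := by
  simp [mapG, Set.image_sdiff hf, filter_not_mem_map_sym2_map hf]

theorem centerStep_mapG (hf : f.Injective) {X : Set V} {G H : MGraph V}
    (h : CenterStep X G H) : CenterStep (f '' X) (mapG f G) (mapG f H) := by
  rcases h with ⟨x, y, z, hxX, hxV, hyz, hxy, hxz, hdeg, rfl⟩ | ⟨x, hxX, hxV, hdeg, hnbr, rfl⟩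
  · refine .inl ⟨f x, f y, f z, hf.mem_set_image.not.mpr hxX, ⟨x, hxV, rfl⟩, hf.ne hyz,
      hf.ne hxy, hf.ne hxz, ?_, ?_⟩
    · simp [mapG, filter_mem_map_sym2_map hf, hdeg]
    · exact mapG_dissolve hf G x y z
  · refine .inr ⟨f x, hf.mem_set_image.not.mpr hxX, ⟨x, hxV, rfl⟩,
      (degree_mapG hf G x).trans_le hdeg, nbrSet_mapG hf G x ▸ hnbr.image f,
      mapG_removeVertex hf G x⟩

theorem exists_centerStep_of_mapG (hf : f.Injective) {X : Set V} {G : MGraph V}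
    {H' : MGraph W} (h : CenterStep (f '' X) (mapG f G) H') :
    ∃ H, CenterStep X G H ∧ H' = mapG f H := by
  rcases h with ⟨_, y', z', hxX, ⟨x, hxV, rfl⟩, hyz, hxy, hxz, hdeg, rfl⟩ |
    ⟨_, hxX, ⟨x, hxV, rfl⟩, hdeg, hnbr, rfl⟩
  · change (G.edges.map (Sym2.map f)).filter (f x ∈ ·) = _ at hdeg
    rw [filter_mem_map_sym2_map hf] at hdeg
    have hpre : ∀ u', s(f x, u') ∈ ({s(f x, y'), s(f x, z')} : Multiset _) → ∃ u, f u = u' := by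
      intro u' hu
      obtain ⟨e, -, he⟩ := Multiset.mem_map.mp (hdeg ▸ hu)
      obtain ⟨u, -, hu⟩ := Sym2.mem_map.mp (he ▸ Sym2.mem_mk_right _ _)
      exact ⟨u, hu⟩
    obtain ⟨y, rfl⟩ := hpre y' (by simp)
    obtain ⟨z, rfl⟩ := hpre z' (by simp)
    refine ⟨_, .inl ⟨x, y, z, hf.mem_set_image.not.mp hxX, hxV, hyz ∘ congrArg f,
      hxy ∘ congrArg f, hxz ∘ congrArg f, ?_, rfl⟩, (mapG_dissolve hf G x y z).symm⟩
    exact Multiset.map_injective (Sym2.map.injective hf) (by simp [hdeg])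
  · refine ⟨_, .inr ⟨x, hf.mem_set_image.not.mp hxX, hxV, degree_mapG hf G x ▸ hdeg, ?_, rfl⟩,
      (mapG_removeVertex hf G x).symm⟩
    rw [← hf.preimage_image (G.nbrSet x)]
    exact (nbrSet_mapG hf G x ▸ hnbr).preimage hf

theorem IsThreeCenter.of_mapG (hf : f.Injective) {X : Set V} {G : MGraph V} {H' : MGraph W}
    (h : IsThreeCenter (f '' X) (mapG f G) H') :
    ∃ H, IsThreeCenter X G H ∧ H' = mapG f H := by
  obtain ⟨hsteps, hfinal⟩ := h
  have key : ∀ K', Relation.ReflTransGen (CenterStep (f '' X)) (mapG f G) K' →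
      ∃ K, Relation.ReflTransGen (CenterStep X) G K ∧ K' = mapG f K := by
    intro K' hK'
    induction hK' with
    | refl => exact ⟨G, .refl, rfl⟩
    | tail _ hstep ih =>
      obtain ⟨K, hK, rfl⟩ := ih
      obtain ⟨L, hL, rfl⟩ := exists_centerStep_of_mapG hf hstep
      exact ⟨L, hK.tail hL, rfl⟩
  obtain ⟨H, hH, rfl⟩ := key H' hsteps
  exact ⟨H, ⟨hH, fun L hL => hfinal _ (centerStep_mapG hf hL)⟩, rfl⟩

end Relabel

theorem CenterStep.verts_subset {V : Type} {X : Set V} {G H : MGraph V} (h : CenterStep X G H) :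
    H.verts ⊆ G.verts := by
  rcases h with ⟨_, _, _, _, _, _, _, _, _, rfl⟩ | ⟨_, _, _, _, _, rfl⟩ <;> exact Set.sdiff_subset

theorem verts_subset_of_reflTransGen {V : Type} {X : Set V} {G H : MGraph V}
    (h : Relation.ReflTransGen (CenterStep X) G H) : H.verts ⊆ G.verts := by
  induction h with
  | refl => exact le_rfl
  | tail _ hstep ih => exact hstep.verts_subset.trans ih

theorem IsThreeCenter.ncard_verts_le_of_torso {V ι : Type} {G : MGraph V} {T : SimpleGraph ι}
    {X : ι → Set V} {t : ι} {H : MGraph (V ⊕ ι)}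
    (hH : IsThreeCenter (Sum.inl '' X t) (torso G T X t) H) (hXt : (X t).Finite)
    {N : Set ι} (hN : T.neighborSet t ⊆ N) (hNfin : N.Finite) :
    H.verts.ncard ≤ (X t).ncard + N.ncard := by
  have hsub : H.verts ⊆ Sum.inl '' X t ∪ Sum.inr '' N := by
    refine (verts_subset_of_reflTransGen hH.1).trans ?_
    rintro _ (⟨v, hv, rfl⟩ | ⟨c, ⟨hc, -⟩, rfl⟩)
    exacts [.inl ⟨v, hv, rfl⟩, .inr ⟨c, hN hc, rfl⟩]
  calc H.verts.ncard ≤ (Sum.inl '' X t ∪ Sum.inr '' N).ncard :=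
        Set.ncard_le_ncard hsub ((hXt.image _).union (hNfin.image _))
    _ ≤ _ := by
        refine (Set.ncard_union_le _ _).trans_eq ?_
        rw [Set.ncard_image_of_injective _ Sum.inl_injective,
          Set.ncard_image_of_injective _ Sum.inr_injective]

end MGraph

@[simp] theorem starGraph_adj_some {ℓ : ℕ} {i : Fin ℓ} {y : Option (Fin ℓ)} :
    (starGraph ℓ).Adj (some i) y ↔ y = none := by
  simpa [starGraph] using by rintro rfl; simp

section RefineTree

variable {ι : Type} {T : SimpleGraph ι} {t : ι} {ℓ : ℕ}

@[simp] theorem refineTree_adj_inl_inl {a b : ι} :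
    (refineTree T t ℓ).Adj (.inl a) (.inl b) ↔ T.Adj a b := by
  simpa [refineTree, T.adj_comm b a] using fun h : T.Adj a b => h.ne

@[simp] theorem refineTree_adj_inr {i : Fin ℓ} {x : ι ⊕ Fin ℓ} :
    (refineTree T t ℓ).Adj (.inr i) x ↔ x = .inl t := by
  simpa [refineTree] using by rintro rfl; simp

@[simp] theorem refineTree_adj_inl_inr {a : ι} {i : Fin ℓ} :
    (refineTree T t ℓ).Adj (.inl a) (.inr i) ↔ a = t := by
  simp [refineTree]

def refineProj (t : ι) : ι ⊕ Fin ℓ → ι := Sum.elim id fun _ => t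

@[simp] theorem refineProj_inl (a : ι) : refineProj (ℓ := ℓ) t (.inl a) = a := rfl

@[simp] theorem refineProj_inr (i : Fin ℓ) : refineProj t (.inr i) = t := rfl

theorem refineTree_adj_refineProj {x y : ι ⊕ Fin ℓ} (h : (refineTree T t ℓ).Adj x y) :
    refineProj t x = refineProj t y ∨ T.Adj (refineProj t x) (refineProj t y) := by
  rcases x with a | i <;> rcases y with b | j <;> simp_all

theorem reachable_refineTree_deleteEdges_iff (E : Set (Sym2 ι)) {x y : ι ⊕ Fin ℓ} :
    ((refineTree T t ℓ).deleteEdges (Sym2.map .inl '' E)).Reachable x y ↔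
      (T.deleteEdges E).Reachable (refineProj t x) (refineProj t y) := by
  have hE : ∀ a b, s(Sum.inl a, Sum.inl b) ∈ Sym2.map (Sum.inl (β := Fin ℓ)) '' E ↔ s(a, b) ∈ E :=
    fun a b => by
      rw [← Sym2.map_mk]; exact (Sym2.map.injective Sum.inl_injective).mem_set_image
  refine SimpleGraph.reachable_iff_of_retraction (refineProj t)
    ⟨Sum.inl, fun {a b} h => ?_⟩ (fun x y h => ?_) (fun x => ?_)
  · rw [SimpleGraph.deleteEdges_adj] at h ⊢
    exact ⟨refineTree_adj_inl_inl.mpr h.1, (hE a b).not.mpr h.2⟩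
  · rw [SimpleGraph.deleteEdges_adj] at h ⊢
    rcases x with a | i <;> rcases y with b | j
    · exact .inr ⟨refineTree_adj_inl_inl.mp h.1, (hE a b).not.mp h.2⟩
    all_goals simp_all
  · rcases x with a | i
    · rfl
    · refine SimpleGraph.Adj.reachable (SimpleGraph.deleteEdges_adj.mpr ⟨by simp, ?_⟩)
      rintro ⟨e, -, he⟩
      obtain ⟨a, -, ha⟩ := Sym2.mem_map.mp (he ▸ Sym2.mem_mk_left (Sum.inr i) (Sum.inl t))
      exact Sum.inl_ne_inr ha

theorem reachable_refineTree_iff {x y : ι ⊕ Fin ℓ} :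
    (refineTree T t ℓ).Reachable x y ↔ T.Reachable (refineProj t x) (refineProj t y) := by
  simpa using reachable_refineTree_deleteEdges_iff (T := T) (t := t) ∅ (x := x) (y := y)

theorem reachable_refineTree_deleteEdge_iff {a b : ι} {x y : ι ⊕ Fin ℓ} :
    ((refineTree T t ℓ).deleteEdges {s(.inl a, .inl b)}).Reachable x y ↔
      (T.deleteEdges {s(a, b)}).Reachable (refineProj t x) (refineProj t y) := by
  simpa using reachable_refineTree_deleteEdges_iff (T := T) (t := t) {s(a, b)} (x := x) (y := y)

theorem reachAvoid_refineTree_iff {s : ι} (hs : s ≠ t) {x y : ι ⊕ Fin ℓ} :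
    ReachAvoid (refineTree T t ℓ) (.inl s) x y ↔
      ReachAvoid T s (refineProj t x) (refineProj t y) := by
  have hmem : ∀ x, x ∈ ({.inl s}ᶜ : Set (ι ⊕ Fin ℓ)) ↔ refineProj t x ∈ ({s}ᶜ : Set ι) := by
    rintro (a | i) <;> simp [hs.symm]
  have key : ∀ (x y : ι ⊕ Fin ℓ) (hx hy),
      ((refineTree T t ℓ).induce {.inl s}ᶜ).Reachable ⟨x, hx⟩ ⟨y, hy⟩ ↔
        (T.induce {s}ᶜ).Reachable ⟨refineProj t x, (hmem x).mp hx⟩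
          ⟨refineProj t y, (hmem y).mp hy⟩ := by
    intro x y hx hy
    refine SimpleGraph.reachable_iff_of_retraction (G := (refineTree T t ℓ).induce {.inl s}ᶜ)
      (H := T.induce {s}ᶜ) (fun x => ⟨refineProj t x.1, (hmem x.1).mp x.2⟩)
      ⟨fun c => ⟨.inl c.1, (hmem (.inl c.1)).mpr c.2⟩, fun h => refineTree_adj_inl_inl.mpr h⟩
      (fun x y h => ?_) (fun x => ?_)
    · simpa [Subtype.ext_iff] using refineTree_adj_refineProj h
    · obtain ⟨a | i, hx⟩ := x
      · rfl
      · exact SimpleGraph.Adj.reachable (by simp; rfl)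
  exact ⟨fun ⟨hx, hy, h⟩ => ⟨_, _, (key x y hx hy).mp h⟩,
    fun ⟨hx, hy, h⟩ => ⟨(hmem x).mpr hx, (hmem y).mpr hy, (key x y _ _).mpr h⟩⟩

theorem SimpleGraph.IsTree.refineTree (hT : T.IsTree) : (refineTree T t ℓ).IsTree := by
  refine ⟨(SimpleGraph.connected_iff_exists_forall_reachable _).mpr
    ⟨.inl t, fun x => reachable_refineTree_iff.mpr (hT.connected.preconnected _ _)⟩, ?_⟩
  refine SimpleGraph.isAcyclic_iff_forall_adj_isBridge.mpr fun x y h => ?_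
  rw [SimpleGraph.isBridge_iff]
  rcases x with a | i <;> rcases y with b | j
  · rw [reachable_refineTree_deleteEdge_iff]
    exact hT.isAcyclic.not_reachable_deleteEdges (refineTree_adj_inl_inl.mp h)
  · obtain rfl := refineTree_adj_inl_inr.mp h
    rw [Sym2.eq_swap]
    exact fun hr => by
      simpa using SimpleGraph.eq_of_reachable_deleteEdges (fun _ => refineTree_adj_inr.mp) hr.symm
  · obtain rfl : b = t := by simpa using h
    exact fun hr => by
      simpa using SimpleGraph.eq_of_reachable_deleteEdges (fun _ => refineTree_adj_inr.mp) hr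
  · simp at h

end RefineTree

section RefineBags

variable {V ι : Type} {T : SimpleGraph ι} {t : ι} {ℓ : ℕ} {X : ι → Set V}
  {Xs : Option (Fin ℓ) → Set V}

def refineStar (t : ι) : Option (Fin ℓ) → ι ⊕ Fin ℓ := fun j => j.elim (.inl t) .inr

theorem refineStar_injective : Function.Injective (refineStar (ℓ := ℓ) t) := by
  rintro (_ | i) (_ | j) <;> simp [refineStar]

@[simp] theorem refineProj_refineStar (j : Option (Fin ℓ)) : refineProj t (refineStar t j) = t := by
  cases j <;> rfl

@[simp] theorem refineBags_refineStar (j : Option (Fin ℓ)) :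
    refineBags X t Xs (refineStar t j) = Xs j := by
  cases j <;> simp [refineStar, refineBags]

@[simp] theorem refineBags_inl_of_ne {a : ι} (h : a ≠ t) : refineBags X t Xs (.inl a) = X a := by
  simp [refineBags, h]

theorem refineStar_or_inl (x : ι ⊕ Fin ℓ) : (∃ j, x = refineStar t j) ∨ ∃ a ≠ t, x = .inl a := by
  rcases x with a | i
  · by_cases h : a = t
    · exact .inl ⟨none, by simp [refineStar, h]⟩
    · exact .inr ⟨a, h, rfl⟩
  · exact .inl ⟨some i, rfl⟩

variable (hXs : ⋃ j, Xs j = X t)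
include hXs

theorem refineBags_subset (x : ι ⊕ Fin ℓ) : refineBags X t Xs x ⊆ X (refineProj t x) := by
  rcases refineStar_or_inl (t := t) x with ⟨j, rfl⟩ | ⟨a, ha, rfl⟩
  · simpa [← hXs] using Set.subset_iUnion Xs j
  · simp [ha]

theorem exists_refineBags_iff {P : ι → Prop} {v : V} :
    (∃ x, v ∈ refineBags X t Xs x ∧ P (refineProj t x)) ↔ ∃ c, v ∈ X c ∧ P c := by
  refine ⟨fun ⟨x, hv, hP⟩ => ⟨_, refineBags_subset hXs x hv, hP⟩, fun ⟨c, hv, hP⟩ => ?_⟩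
  by_cases hc : c = t
  · subst hc
    obtain ⟨j, hj⟩ := Set.mem_iUnion.mp (hXs ▸ hv)
    exact ⟨refineStar c j, by simpa using hj, by simpa using hP⟩
  · exact ⟨.inl c, by simpa [hc] using hv, hP⟩

theorem pairwise_disjoint_refineBags (hX : Pairwise fun a b => Disjoint (X a) (X b))
    (hXs' : Pairwise fun i j => Disjoint (Xs i) (Xs j)) :
    Pairwise fun x y => Disjoint (refineBags X t Xs x) (refineBags X t Xs y) := by
  intro x y hxy
  by_cases hp : refineProj t x = refineProj t y
  · rcases refineStar_or_inl (t := t) x with ⟨i, rfl⟩ | ⟨a, ha, rfl⟩ <;>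
    rcases refineStar_or_inl (t := t) y with ⟨j, rfl⟩ | ⟨b, hb, rfl⟩
    · simpa using hXs' (fun h : i = j => hxy (h ▸ rfl))
    all_goals simp only [refineProj_refineStar, refineProj_inl] at hp
    · exact absurd hp.symm hb
    · exact absurd hp ha
    · exact absurd (congrArg _ hp) hxy
  · exact (hX hp).mono (refineBags_subset hXs x) (refineBags_subset hXs y)

end RefineBags

namespace MGraph

section Refine

variable {V ι : Type} {G : MGraph V} {T : SimpleGraph ι} {X : ι → Set V} {t : ι} {ℓ : ℕ}
  {Xs : Option (Fin ℓ) → Set V}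

theorem IsTCD.refine (h : IsTCD G T X) (hstar : IsTCD (G.induce (X t)) (starGraph ℓ) Xs) :
    IsTCD G (refineTree T t ℓ) (refineBags X t Xs) := by
  have hXs := hstar.iUnion_eq_of_induce (h.subset_verts t)
  refine ⟨h.1.refineTree, pairwise_disjoint_refineBags hXs h.2.1 hstar.2.1, ?_⟩
  ext v
  simpa [← h.2.2] using exists_refineBags_iff hXs (P := fun _ => True) (v := v)

theorem edgeSide_refineTree_inl (hXs : ⋃ j, Xs j = X t) (a b : ι) :
    edgeSide (refineTree T t ℓ) (refineBags X t Xs) (.inl a) (.inl b) = edgeSide T X a b := by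
  ext v
  simp only [edgeSide, Set.mem_iUnion, Set.mem_ofPred_eq, exists_prop,
    reachable_refineTree_deleteEdge_iff, refineProj_inl]
  simpa only [and_comm] using
    exists_refineBags_iff hXs (P := (T.deleteEdges {s(a, b)}).Reachable a) (v := v)

theorem adhesion_refineTree_inl (hXs : ⋃ j, Xs j = X t) (a b : ι) :
    adhesion G (refineTree T t ℓ) (refineBags X t Xs) (.inl a) (.inl b) = adhesion G T X a b := by
  simp only [adhesion, edgeSide_refineTree_inl hXs]

theorem card_adhesion_refineTree_inr_le (h : IsTCD G T X)
    (hstar : IsTCD (G.induce (X t)) (starGraph ℓ) Xs) (hXt : (X t).Finite) (i : Fin ℓ) :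
    Multiset.card (adhesion G (refineTree T t ℓ) (refineBags X t Xs) (.inr i) (.inl t)) ≤
      Multiset.card (adhesion (G.induce (X t)) (starGraph ℓ) Xs (some i) none) +
        ∑ᶠ x ∈ G.boundary (X t) ∩ Xs (some i), G.bWeight (X t) x := by
  have hsub : Xs (some i) ⊆ X t :=
    hstar.iUnion_eq_of_induce (h.subset_verts t) ▸ Set.subset_iUnion Xs (some i)
  rw [adhesion_eq_cut_of_forall_adj_eq (h.refine hstar) (refineTree_adj_inl_inr.mpr rfl)
      (fun _ => refineTree_adj_inr.mp),
    adhesion_eq_cut_of_forall_adj_eq hstar (starGraph_adj_some.mpr rfl).symm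
      (fun _ => starGraph_adj_some.mp)]
  exact card_cut_le hsub (hXt.subset hsub)

section Torso

variable (h : IsTCD G T X) (h' : IsTCD G (refineTree T t ℓ) (refineBags X t Xs))
  (hXs : ⋃ j, Xs j = X t) {s : ι} (hst : s ≠ t)
include h h' hXs hst

theorem compOf_refineTree (v : V) :
    compOf (refineTree T t ℓ) (refineBags X t Xs) (.inl s) v = .inl (compOf T X s v) := by
  by_cases hex : ∃ c, T.Adj s c ∧ ∃ b, v ∈ X b ∧ ReachAvoid T s c b
  · obtain ⟨c, hc, b, hv, hr⟩ := hex
    obtain ⟨x, hvx, hrx⟩ := (exists_refineBags_iff hXs).mpr ⟨b, hv, hr⟩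
    rw [compOf_eq h.1.isAcyclic h.2.1 hc hv hr]
    exact compOf_eq h'.1.isAcyclic h'.2.1 (refineTree_adj_inl_inl.mpr hc) hvx
      ((reachAvoid_refineTree_iff hst).mpr hrx)
  · rw [compOf, compOf, dif_neg hex, dif_neg]
    rintro ⟨c | i, hc, x, hv, hr⟩
    · exact hex ⟨c, refineTree_adj_inl_inl.mp hc,
        (exists_refineBags_iff hXs).mp ⟨x, hv, (reachAvoid_refineTree_iff hst).mp hr⟩⟩
    · exact hst (refineTree_adj_inl_inr.mp hc)

theorem torsoMap_refineTree :
    torsoMap (refineTree T t ℓ) (refineBags X t Xs) (.inl s) =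
      Sum.map id .inl ∘ torsoMap T X s := by
  ext v : 1
  by_cases hv : v ∈ X s <;> simp [torsoMap, hst, hv, compOf_refineTree h h' hXs hst]

theorem torso_refineTree :
    torso G (refineTree T t ℓ) (refineBags X t Xs) (.inl s) =
      mapG (Sum.map id .inl) (torso G T X s) := by
  have hφ : (Sum.map id .inl : V ⊕ ι → V ⊕ (ι ⊕ Fin ℓ)).Injective :=
    Function.injective_id.sumMap Sum.inl_injective
  have hcomp : {c | (refineTree T t ℓ).Adj (.inl s) c ∧
      ∃ x v, v ∈ refineBags X t Xs x ∧ ReachAvoid (refineTree T t ℓ) (.inl s) c x} =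
      Sum.inl '' {c | T.Adj s c ∧ ∃ b v, v ∈ X b ∧ ReachAvoid T s c b} := by
    ext (c | i)
    · simp only [Set.mem_ofPred_eq, Set.mem_image, Sum.inl.injEq, exists_eq_right,
        refineTree_adj_inl_inl, reachAvoid_refineTree_iff hst, refineProj_inl]
      rw [exists_comm, exists_comm (α := ι)]
      simp only [exists_refineBags_iff hXs]
    · simp [hst]
  simp only [torso, mapG, torsoMap_refineTree h h' hXs hst, refineBags_inl_of_ne hst, hcomp,
    Set.image_union, Set.image_image, Sum.map_inl, Sum.map_inr, id, MGraph.mk.injEq, true_and]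
  rw [← Multiset.filter_not_isDiag_map_sym2_map hφ, Multiset.map_map, ← Sym2.map_comp]
  -- the two sides differ only in the `DecidableEq (ι ⊕ Fin ℓ)` instance used by the filter
  convert rfl

theorem exists_isThreeCenter_of_refineTree {H : MGraph (V ⊕ (ι ⊕ Fin ℓ))}
    (hH : IsThreeCenter (Sum.inl '' refineBags X t Xs (.inl s))
      (torso G (refineTree T t ℓ) (refineBags X t Xs) (.inl s)) H) :
    ∃ H₀, IsThreeCenter (Sum.inl '' X s) (torso G T X s) H₀ ∧ H.verts.ncard = H₀.verts.ncard := by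
  have hφ : (Sum.map id .inl : V ⊕ ι → V ⊕ (ι ⊕ Fin ℓ)).Injective :=
    Function.injective_id.sumMap Sum.inl_injective
  rw [torso_refineTree h h' hXs hst, refineBags_inl_of_ne hst,
    show Sum.inl '' X s = Sum.map id .inl '' (Sum.inl '' X s) by rw [Set.image_image]; rfl] at hH
  obtain ⟨H₀, hH₀, rfl⟩ := hH.of_mapG hφ
  exact ⟨H₀, hH₀, Set.ncard_image_of_injective _ hφ⟩

end Torso

theorem isLeaf_refineTree_inr (i : Fin ℓ) : IsLeaf (refineTree T t ℓ) (.inr i) :=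
  ⟨.inl t, refineTree_adj_inr.mpr rfl, fun _ => refineTree_adj_inr.mp⟩

theorem IsLeaf.refineTree_inl {s : ι} (hst : s ≠ t) (hs : IsLeaf T s) :
    IsLeaf (refineTree T t ℓ) (.inl s) := by
  obtain ⟨c, hc, hu⟩ := hs
  refine ⟨.inl c, refineTree_adj_inl_inl.mpr hc, fun y hy => ?_⟩
  rcases y with b | i
  · rw [hu b (refineTree_adj_inl_inl.mp hy)]
  · exact absurd (refineTree_adj_inl_inr.mp hy) hst

theorem IsLeaf.neighborSet_refineTree_subset (ht : IsLeaf T t) :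
    ∃ t₀, (refineTree T t ℓ).neighborSet (.inl t) ⊆ insert (.inl t₀) (Set.range .inr) := by
  obtain ⟨t₀, -, hu⟩ := ht
  refine ⟨t₀, fun y hy => ?_⟩
  rcases y with b | i
  · exact .inl (congrArg _ (hu b (refineTree_adj_inl_inl.mp hy)))
  · exact .inr ⟨i, rfl⟩

theorem ncard_lt_ncard_refineBags [Finite ι] (hXs : ⋃ j, Xs j = X t) (hnt : NonTrivial Xs) :
    {s | (X s).Nonempty}.ncard < {x | (refineBags X t Xs x).Nonempty}.ncard := by
  obtain ⟨j₁, j₂, hj, h₁, h₂⟩ := hnt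
  set A := {s | (X s).Nonempty}
  have htA : t ∈ A := h₁.mono (hXs ▸ Set.subset_iUnion Xs j₁)
  have hsub : Sum.inl '' (A \ {t}) ∪ refineStar t '' {j₁, j₂} ⊆
      {x | (refineBags X t Xs x).Nonempty} := by
    rintro _ (⟨a, ⟨ha, hat⟩, rfl⟩ | ⟨j, hj, rfl⟩)
    · rw [Set.mem_ofPred_eq, refineBags_inl_of_ne hat]
      exact ha
    · rcases hj with rfl | rfl <;> simpa
  have hdisj : Disjoint (Sum.inl '' (A \ {t})) (refineStar t '' {j₁, j₂}) := by
    refine Set.disjoint_left.mpr ?_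
    rintro _ ⟨a, ⟨-, hat⟩, rfl⟩ ⟨j, -, hj⟩
    exact hat (by simpa using congrArg (refineProj t) hj.symm)
  calc A.ncard < (A \ {t}).ncard + 2 := by
        rw [← Set.ncard_sdiff_singleton_add_one htA]; omega
    _ = (Sum.inl '' (A \ {t}) ∪ refineStar t '' {j₁, j₂}).ncard := by
        rw [Set.ncard_union_eq hdisj, Set.ncard_image_of_injective _ Sum.inl_injective,
          Set.ncard_image_of_injective _ refineStar_injective, Set.ncard_pair hj]
    _ ≤ _ := Set.ncard_le_ncard hsub

theorem IsThreeCenter.ncard_verts_le_of_refineTree_center (ht : IsLeaf T t)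
    (hfin : (Xs none).Finite) {H : MGraph (V ⊕ (ι ⊕ Fin ℓ))}
    (hH : IsThreeCenter (Sum.inl '' refineBags X t Xs (.inl t))
      (torso G (refineTree T t ℓ) (refineBags X t Xs) (.inl t)) H) :
    H.verts.ncard ≤ (Xs none).ncard + (ℓ + 1) := by
  obtain ⟨t₀, hN⟩ := ht.neighborSet_refineTree_subset (ℓ := ℓ)
  have hbag : refineBags X t Xs (.inl t) = Xs none := refineBags_refineStar none
  refine (hH.ncard_verts_le_of_torso (hbag ▸ hfin) hN ((Set.finite_range _).insert _)).trans ?_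
  rw [hbag]
  refine Nat.add_le_add_left ((Set.ncard_insert_le _ _).trans ?_) _
  rw [Set.ncard_range_of_injective Sum.inr_injective, Nat.card_eq_fintype_card, Fintype.card_fin]

end Refine

end MGraph


theorem refine_large_leaf_general {V ι : Type} [Finite ι] (G : MGraph V)
    (hfin : G.verts.Finite) (w : ℕ)
    (T : SimpleGraph ι) (X : ι → Set V) (htcd : IsTCD G T X)
    (hin : InWidthLE G T X (2 * w)) (t : ι) (hleaf : IsLeaf T t)
    (ℓ : ℕ) (hℓ : 1 ≤ ℓ) (Xs : Option (Fin ℓ) → Set V)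
    (hstar : IsTCD (G.induce (X t)) (starGraph ℓ) Xs)
    (hnt : NonTrivial Xs)
    (hsw : InWidthLE (G.induce (X t)) (starGraph ℓ) Xs w)
    (hcenter : (Xs none).ncard + ℓ ≤ w)
    (hγ : ∀ i : Fin ℓ, (∑ᶠ x ∈ G.boundary (X t) ∩ Xs (some i), G.bWeight (X t) x) ≤ w) :
    IsTCD G (refineTree T t ℓ) (refineBags X t Xs) ∧
    InWidthLE G (refineTree T t ℓ) (refineBags X t Xs) (2 * w) ∧
    {s : ι | (X s).Nonempty}.ncard < {s : ι ⊕ Fin ℓ | (refineBags X t Xs s).Nonempty}.ncard := by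
  have hXs := hstar.iUnion_eq_of_induce (htcd.subset_verts t)
  have hXt : (X t).Finite := hfin.subset (htcd.subset_verts t)
  have htcd' := htcd.refine hstar
  have hleafEdge (i : Fin ℓ) :
      Multiset.card (adhesion G (refineTree T t ℓ) (refineBags X t Xs) (.inr i) (.inl t)) ≤ 2 * w :=
    (card_adhesion_refineTree_inr_le htcd hstar hXt i).trans
      (two_mul w ▸ add_le_add (hsw.1 _ _ (starGraph_adj_some.mpr rfl)) (hγ i))
  refine ⟨htcd', ⟨fun x y hxy => ?_, fun x hx H hH => ?_⟩, ncard_lt_ncard_refineBags hXs hnt⟩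
  · rcases x with a | i <;> rcases y with b | j
    · exact adhesion_refineTree_inl hXs a b ▸ hin.1 a b (refineTree_adj_inl_inl.mp hxy)
    · obtain rfl := refineTree_adj_inl_inr.mp hxy
      exact adhesion_comm (G := G) (Sum.inr j) _ ▸ hleafEdge j
    · obtain rfl : b = t := by simpa using hxy
      exact hleafEdge i
    · simp at hxy
  · rcases x with s | i
    · by_cases hst : s = t
      · subst hst
        have := hH.ncard_verts_le_of_refineTree_center hleaf
          (hXt.subset (hXs ▸ Set.subset_iUnion Xs none))
        omega
      · obtain ⟨H₀, hH₀, hcard⟩ := exists_isThreeCenter_of_refineTree htcd htcd' hXs hst hH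
        exact hcard ▸ hin.2 s (fun hl => hx (hl.refineTree_inl hst)) H₀ hH₀
    · exact absurd (isLeaf_refineTree_inr i) hx

theorem refine_large_leaf {V ι : Type} [Finite ι] (G : MGraph V)
    (hfin : G.verts.Finite) (h3 : G.ThreeEdgeConnected) (w : ℕ)
    (T : SimpleGraph ι) (X : ι → Set V) (htcd : IsTCD G T X)
    (hin : InWidthLE G T X (2 * w)) (t : ι) (hleaf : IsLeaf T t)
    (hbig : 2 * w ≤ (X t).ncard)
    (ℓ : ℕ) (hℓ : 1 ≤ ℓ) (Xs : Option (Fin ℓ) → Set V)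
    (hstar : IsTCD (G.induce (X t)) (starGraph ℓ) Xs)
    (hnt : NonTrivial Xs)
    (hsw : InWidthLE (G.induce (X t)) (starGraph ℓ) Xs w)
    (hcenter : (Xs none).ncard + ℓ ≤ w)
    (hγ : ∀ i : Fin ℓ, (∑ᶠ x ∈ G.boundary (X t) ∩ Xs (some i), G.bWeight (X t) x) ≤ w) :
    IsTCD G (refineTree T t ℓ) (refineBags X t Xs) ∧
    InWidthLE G (refineTree T t ℓ) (refineBags X t Xs) (2 * w) ∧
    {s : ι | (X s).Nonempty}.ncard < {s : ι ⊕ Fin ℓ | (refineBags X t Xs s).Nonempty}.ncard :=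
  refine_large_leaf_general G hfin w T X htcd hin t hleaf ℓ hℓ Xs hstar hnt hsw hcenter hγ
end
end

section
/- With G, k, w = n³/2 + k, and G' as in the Min Bisection reduction (V induces G, |Q| = w−2, each pair x,y ∈ Q joined by w+1 common neighbors C_{x,y}, each vertex of V adjacent to n² vertices of Q), if G' has tree-cut width at most w, then G admits a bipartition (V_1, V_2) of its vertex set with |V_1| = |V_2| = n/2 and |δ_G(V_1,V_2)| ≤ k. -/
open scoped Classical

noncomputable section
open scoped Classical
open MGraph

/-! Write `n = 2m`, so that `w = 4m³ + k`; if `k ≥ m²` any bisection will do. Otherwise take a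
tree-cut decomposition `(T, X)` of `G'` of width at most `w`. Two vertices of `Q` are joined by
`w + 1` edge-disjoint paths through their private common neighbours, so `Q` lies in one bag
`X t₀`. Every vertex of `V` outside `X t₀` has `n² ≥ 3` edges into `Q`, so the component of
`T - t₀` containing it survives in the 3-center of the torso at `t₀`; as `|Q| = w - 2`, the vertices
of `V` in `X t₀` and these components number at most two together. The adhesion between `t₀` and
such a component contains the `n²` edges into `Q` of each of its vertices of `V`, so it holds at
most `m` of them. Hence there are exactly two components, holding `m` vertices of `V` each, and the
adhesion `m n² + |δ_G(V₁, V₂)| ≤ w` bounds the cut by `k`.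
-/

namespace MGraph

variable {V ι : Type}

theorem card_le_card_adhesion (G : MGraph V) (T : SimpleGraph ι) (X : ι → Set V) {a b : ι}
    {F : Finset (Sym2 V)}
    (hF : ∀ e ∈ F, e ∈ G.edges ∧ ∃ x ∈ edgeSide T X a b, ∃ y ∈ edgeSide T X b a, e = s(x, y)) :
    F.card ≤ Multiset.card (G.adhesion T X a b) :=
  Multiset.card_le_card <| (Multiset.le_iff_subset F.nodup).2 fun e he =>
    Multiset.mem_filter.2 (hF e he)

theorem CenterStep.exists_removed {X : Set V} {G G' : MGraph V} (h : CenterStep X G G') :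
    ∃ x, x ∉ X ∧ x ∈ G.verts ∧ G'.verts = G.verts \ {x} ∧ G.degree x ≤ 2 ∧
      ∀ e ∈ G.edges, x ∉ e → e ∈ G'.edges := by
  rcases h with ⟨x, y, z, hxX, hx, -, -, -, hxe, rfl⟩ | ⟨x, hxX, hx, hdeg, -, rfl⟩
  · refine ⟨x, hxX, hx, rfl, by simp [degree, hxe], fun e he hxe => ?_⟩
    exact Multiset.mem_add.2 (Or.inl (Multiset.mem_filter.2 ⟨he, hxe⟩))
  · exact ⟨x, hxX, hx, rfl, hdeg, fun e he hxe => Multiset.mem_filter.2 ⟨he, hxe⟩⟩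

theorem exists_isThreeCenter (X : Set V) (G : MGraph V) (hG : G.verts.Finite) :
    ∃ H, IsThreeCenter X G H := by
  induction h : G.verts.ncard using Nat.strong_induction_on generalizing G with
  | _ N ih =>
    by_cases hstep : ∃ G', CenterStep X G G'
    · obtain ⟨G', hGG'⟩ := hstep
      obtain ⟨x, -, hx, hv, -⟩ := hGG'.exists_removed
      have hlt : G'.verts.ncard < N :=
        h ▸ hv ▸ Set.ncard_lt_ncard (Set.sdiff_singleton_ssubset.2 hx) hG
      obtain ⟨H, hG'H, hH⟩ := ih _ hlt G' (hv ▸ hG.sdiff) rfl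
      exact ⟨H, .head hGG' hG'H, hH⟩
    · exact ⟨G, .refl, fun H' hH' => hstep ⟨H', hH'⟩⟩

theorem verts_subset_of_centerSteps {X : Set V} {G H : MGraph V}
    (h : Relation.ReflTransGen (CenterStep X) G H) : H.verts ⊆ G.verts := by
  induction h with
  | refl => rfl
  | tail _ hstep ih =>
    obtain ⟨x, -, -, hv, -⟩ := hstep.exists_removed
    exact hv ▸ Set.sdiff_subset.trans ih

theorem inter_verts_subset_of_centerSteps {X : Set V} {G H : MGraph V}
    (h : Relation.ReflTransGen (CenterStep X) G H) : X ∩ G.verts ⊆ H.verts := by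
  induction h with
  | refl => exact Set.inter_subset_right
  | tail _ hstep ih =>
    obtain ⟨x, hxX, -, hv, -⟩ := hstep.exists_removed
    exact fun v hv' => hv ▸ ⟨ih hv', fun hvx => hxX (Set.mem_singleton_iff.1 hvx ▸ hv'.1)⟩

/-- No step can remove `u`, as its degree stays at least 3: its edges to `X` are never touched. -/
theorem mem_verts_of_centerSteps {X : Set V} {G H : MGraph V}
    (h : Relation.ReflTransGen (CenterStep X) G H) {u : V} (hu : u ∈ G.verts)
    {E : Finset (Sym2 V)} (hE : ∀ e ∈ E, e ∈ G.edges ∧ u ∈ e ∧ ∀ v ∈ e, v ≠ u → v ∈ X)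
    (hcard : 3 ≤ E.card) : u ∈ H.verts := by
  suffices u ∈ H.verts ∧ ∀ e ∈ E, e ∈ H.edges from this.1
  induction h with
  | refl => exact ⟨hu, fun e he => (hE e he).1⟩
  | tail _ hstep ih =>
    obtain ⟨hu', hE'⟩ := ih
    obtain ⟨x, hxX, -, hv, hdeg, hkeep⟩ := hstep.exists_removed
    have hxu : x ≠ u := by
      rintro rfl
      have : E.card ≤ _ := Multiset.card_le_card <| (Multiset.le_iff_subset E.nodup).2
        fun e he => Multiset.mem_filter.2 ⟨hE' e he, (hE e he).2.1⟩
      exact absurd (this.trans hdeg) (by omega)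
    have hxE : ∀ e ∈ E, x ∉ e := fun e he hx => hxX ((hE e he).2.2 x hx hxu)
    exact ⟨hv ▸ ⟨hu', fun h => hxu (Set.mem_singleton_iff.1 h).symm⟩,
      fun e he => hkeep e (hE' e he) (hxE e he)⟩

theorem tcwLE.mono {G : MGraph V} {w w' : ℕ} (h : G.tcwLE w) (hw : w ≤ w') : G.tcwLE w' := by
  obtain ⟨ι, hι, T, X, hTX, hadh, htorso⟩ := h
  exact ⟨ι, hι, T, X, hTX, fun a b hab => (hadh a b hab).trans hw,
    fun t H hH => (htorso t H hH).trans hw⟩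

theorem tcwLE_ncard_verts (G : MGraph V) (hG : G.verts.Finite) : G.tcwLE G.verts.ncard := by
  refine ⟨Unit, inferInstance, ⊥, fun _ => G.verts, ⟨?_, ?_, Set.iUnion_const _⟩, ?_, ?_⟩
  · exact ⟨⟨fun _ _ => .of_subsingleton⟩, SimpleGraph.isAcyclic_bot⟩
  · exact fun a b hab => absurd (Subsingleton.elim a b) hab
  · exact fun a b hab => absurd hab (by simp)
  · intro t H hH
    have htorso : (G.torso ⊥ (fun _ => G.verts) t).verts ⊆ Sum.inl '' G.verts := by
      rintro v (hv | ⟨s, hs, -⟩)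
      · exact hv
      · exact absurd hs.1 (by simp)
    calc H.verts.ncard ≤ (Sum.inl '' G.verts : Set (V ⊕ Unit)).ncard :=
          Set.ncard_le_ncard ((verts_subset_of_centerSteps hH.1).trans htorso) (hG.image _)
      _ = G.verts.ncard := Set.ncard_image_of_injective _ Sum.inl_injective

theorem tcwLE_of_tcw_le {G : MGraph V} (hG : G.verts.Finite) {w : ℕ} (h : G.tcw ≤ w) :
    G.tcwLE w :=
  tcwLE.mono (Nat.sInf_mem (s := {w | G.tcwLE w}) ⟨_, G.tcwLE_ncard_verts hG⟩) h

end MGraph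

namespace SimpleGraph

variable {ι : Type} {T : SimpleGraph ι}

theorem Walk.reachable_deleteEdges_or {a b u t : ι} (p : T.Walk u t)
    (hu : (T.deleteEdges {s(a, b)}).Reachable a u ∨ (T.deleteEdges {s(a, b)}).Reachable b u) :
    (T.deleteEdges {s(a, b)}).Reachable a t ∨ (T.deleteEdges {s(a, b)}).Reachable b t := by
  induction p with
  | nil => exact hu
  | @cons x y z h q ih =>
    apply ih
    by_cases he : s(x, y) = s(a, b)
    · rcases Sym2.eq_iff.1 he with ⟨rfl, rfl⟩ | ⟨rfl, rfl⟩
      · exact Or.inr .rfl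
      · exact Or.inl .rfl
    · have hxy : (T.deleteEdges {s(a, b)}).Adj x y := (deleteEdges_adj ..).2 ⟨h, he⟩
      exact hu.imp (·.trans hxy.reachable) (·.trans hxy.reachable)

theorem Connected.reachable_deleteEdges_or (hT : T.Connected) (a b t : ι) :
    (T.deleteEdges {s(a, b)}).Reachable a t ∨ (T.deleteEdges {s(a, b)}).Reachable b t :=
  (hT.preconnected a t).some.reachable_deleteEdges_or (Or.inl .rfl)

end SimpleGraph

namespace MGraph

variable {V ι : Type} {T : SimpleGraph ι}

theorem ReachAvoid.of_walk {t x y : ι} (p : T.Walk x y) (ht : t ∉ p.support) :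
    ReachAvoid T t x y :=
  ⟨_, _, ⟨p.induce _ fun _ hv (hvt : _ = t) => ht (hvt ▸ hv)⟩⟩

theorem ReachAvoid.reachable_deleteEdges_s18 {t x y : ι} (h : ReachAvoid T t x y) {d : Sym2 ι}
    (hd : t ∈ d) : (T.deleteEdges {d}).Reachable x y := by
  obtain ⟨_, _, hr⟩ := h
  let φ : T.induce ({t}ᶜ : Set ι) →g T.deleteEdges {d} :=
    ⟨Subtype.val, fun {u v} huv => (SimpleGraph.deleteEdges_adj ..).2
      ⟨SimpleGraph.induce_adj.1 huv, fun hd' => by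
        rcases Sym2.mem_iff.1 ((Set.mem_singleton_iff.1 hd') ▸ hd) with h | h
        exacts [u.2 h.symm, v.2 h.symm]⟩⟩
  exact SimpleGraph.Reachable.map φ hr

theorem exists_adj_reachAvoid (hT : T.Connected) {a b : ι} (hab : a ≠ b) :
    ∃ c, T.Adj a c ∧ ReachAvoid T a c b := by
  obtain ⟨p, hp⟩ := (hT.preconnected a b).some.toPath
  cases p with
  | nil => exact absurd rfl hab
  | cons h r => exact ⟨_, h, .of_walk r ((SimpleGraph.Walk.cons_isPath_iff _ _).1 hp).2⟩

variable {G : MGraph V} {X : ι → Set V}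

theorem IsTCD.exists_mem (hTX : IsTCD G T X) {v : V} (hv : v ∈ G.verts) : ∃ t, v ∈ X t :=
  Set.mem_iUnion.1 (hTX.2.2 ▸ hv)

theorem IsTCD.eq_of_mem (hTX : IsTCD G T X) {v : V} {t t' : ι} (h : v ∈ X t) (h' : v ∈ X t') :
    t = t' :=
  by_contra fun hne => Set.disjoint_left.1 (hTX.2.1 hne) h h'

theorem mem_edgeSide_of_mem {v : V} {a : ι} (hv : v ∈ X a) (b : ι) : v ∈ edgeSide T X a b :=
  Set.mem_biUnion (SimpleGraph.Reachable.refl _) hv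

theorem IsTCD.mem_edgeSide_or (hTX : IsTCD G T X) (a b : ι) {v : V} (hv : v ∈ G.verts) :
    v ∈ edgeSide T X a b ∨ v ∈ edgeSide T X b a := by
  obtain ⟨t, hvt⟩ := hTX.exists_mem hv
  refine (hTX.1.connected.reachable_deleteEdges_or a b t).imp
    (Set.mem_biUnion · hvt) fun h => Set.mem_biUnion ?_ hvt
  rwa [Set.mem_ofPred_eq, Sym2.eq_swap]

theorem ReachAvoid.mem_edgeSide {t s t' : ι} (h : ReachAvoid T t s t') {v : V} (hv : v ∈ X t') :
    v ∈ edgeSide T X s t :=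
  Set.mem_biUnion (h.reachable_deleteEdges_s18 (Sym2.mem_mk_right s t)) hv

theorem ReachAvoid.mem_edgeSide_of_ne {t s s' t' : ι} (h : ReachAvoid T t s' t')
    (hs' : T.Adj t s') (hne : s' ≠ s) {v : V} (hv : v ∈ X t') : v ∈ edgeSide T X t s := by
  have hts' : (T.deleteEdges {s(t, s)}).Adj t s' := by
    refine (SimpleGraph.deleteEdges_adj ..).2 ⟨hs', fun he => ?_⟩
    rcases Sym2.eq_iff.1 (Set.mem_singleton_iff.1 he) with ⟨-, h⟩ | ⟨-, h⟩
    exacts [hne h, hs'.ne h.symm]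
  exact Set.mem_biUnion (hts'.reachable.trans (h.reachable_deleteEdges_s18 (Sym2.mem_mk_left t s))) hv

theorem IsTCD.compOf_spec (hTX : IsTCD G T X) {t t' : ι} {v : V} (hv : v ∈ X t') (ht : t' ≠ t) :
    T.Adj t (compOf T X t v) ∧ ReachAvoid T t (compOf T X t v) t' := by
  obtain ⟨c, hc, hra⟩ := exists_adj_reachAvoid hTX.1.connected ht.symm
  have hex : ∃ s, T.Adj t s ∧ ∃ t', v ∈ X t' ∧ ReachAvoid T t s t' := ⟨c, hc, t', hv, hra⟩
  obtain ⟨hadj, t'', hv', hra'⟩ := hex.choose_spec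
  rw [compOf, dif_pos hex]
  exact ⟨hadj, hTX.eq_of_mem hv' hv ▸ hra'⟩

/-- The paths `x - c - y` are pairwise edge-disjoint, so a tree edge separating `x` from `y`
would carry one edge of each of them in its adhesion. -/
theorem IsTCD.mem_of_commonNbrs (hTX : IsTCD G T X) {w : ℕ}
    (hadh : ∀ a b, T.Adj a b → Multiset.card (G.adhesion T X a b) ≤ w)
    {x y : V} {C : Finset V} (hC : w < C.card) (hxC : x ∉ C) (hyC : y ∉ C)
    (hCG : ∀ c ∈ C, c ∈ G.verts ∧ s(x, c) ∈ G.edges ∧ s(c, y) ∈ G.edges)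
    {t : ι} (hx : x ∈ X t) (hy : y ∈ G.verts) : y ∈ X t := by
  obtain ⟨t', hy'⟩ := hTX.exists_mem hy
  by_contra hyt
  obtain ⟨s, hadj, hra⟩ :=
    exists_adj_reachAvoid hTX.1.connected fun (h : t = t') => hyt (by rwa [h])
  let g : V → Sym2 V := fun c => if c ∈ edgeSide T X s t then s(x, c) else s(c, y)
  have hg : ∀ e ∈ C.image g, e ∈ G.edges ∧
      ∃ a ∈ edgeSide T X t s, ∃ b ∈ edgeSide T X s t, e = s(a, b) := by
    simp only [Finset.mem_image, forall_exists_index, and_imp]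
    rintro _ c hc rfl
    obtain ⟨hcG, hxc, hcy⟩ := hCG c hc
    by_cases hcs : c ∈ edgeSide T X s t
    · simp only [g, if_pos hcs]
      exact ⟨hxc, x, mem_edgeSide_of_mem hx s, c, hcs, rfl⟩
    · have hct := (hTX.mem_edgeSide_or t s hcG).resolve_right hcs
      simp only [g, if_neg hcs]
      exact ⟨hcy, c, hct, y, hra.mem_edgeSide hy', rfl⟩
  have hginj : Set.InjOn g C := fun c hc c' hc' he => by
    have hmem : c ∈ g c' := he ▸ by by_cases h : c ∈ edgeSide T X s t <;> simp [g, h]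
    have hcx : c ≠ x := ne_of_mem_of_not_mem hc hxC
    have hcy : c ≠ y := ne_of_mem_of_not_mem hc hyC
    by_cases h : c' ∈ edgeSide T X s t <;> simp_all [g]
  have := card_le_card_adhesion G T X hg
  rw [Finset.card_image_of_injOn hginj] at this
  exact absurd (this.trans (hadh t s hadj)) (not_le.2 hC)

theorem IsTCD.inr_compOf_mem_of_centerSteps (hTX : IsTCD G T X) {t : ι} {H : MGraph (V ⊕ ι)}
    (hH : Relation.ReflTransGen (CenterStep (Sum.inl '' X t)) (G.torso T X t) H)
    {u : V} {t' : ι} (hu : u ∈ X t') (ht' : t' ≠ t)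
    {D : Finset V} (hD : 3 ≤ D.card) (hDX : ∀ d ∈ D, d ∈ X t ∧ s(u, d) ∈ G.edges) :
    Sum.inr (compOf T X t u) ∈ H.verts := by
  obtain ⟨hadj, hra⟩ := hTX.compOf_spec hu ht'
  have hut : u ∉ X t := fun h => ht' (hTX.eq_of_mem hu h)
  let e : V → Sym2 (V ⊕ ι) := fun d => s(Sum.inr (compOf T X t u), Sum.inl d)
  have he : ∀ d ∈ D, e d ∈ (G.torso T X t).edges := fun d hd => by
    refine Multiset.mem_filter.2 ⟨Multiset.mem_map.2 ⟨s(u, d), (hDX d hd).2, ?_⟩, by simp [e]⟩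
    simp [e, torsoMap, hut, (hDX d hd).1]
  refine mem_verts_of_centerSteps hH (Or.inr ⟨_, ⟨hadj, t', u, hu, hra⟩, rfl⟩)
    (E := D.image e) ?_ ?_
  · simp only [Finset.mem_image, forall_exists_index, and_imp]
    rintro _ d hd rfl
    refine ⟨he d hd, Sym2.mem_mk_left _ _, fun v hv hne => ?_⟩
    rcases Sym2.mem_iff.1 hv with rfl | rfl
    exacts [absurd rfl hne, ⟨d, (hDX d hd).1, rfl⟩]
  · rwa [Finset.card_image_of_injective _ fun d d' h => by simpa [e] using h]

/-- The components of `T - t` holding a vertex with three edges into `X t` survive in the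
3-center of the torso at `t`, next to the whole bag `X t`. -/
theorem IsTCD.ncard_add_card_le [Finite V] [Finite ι] (hTX : IsTCD G T X) {w : ℕ}
    (hW : WidthLE G T X w) (t : ι) {S : Finset ι}
    (hS : ∀ s ∈ S, ∃ u t', u ∈ X t' ∧ t' ≠ t ∧ compOf T X t u = s ∧
      ∃ D : Finset V, 3 ≤ D.card ∧ ∀ d ∈ D, d ∈ X t ∧ s(u, d) ∈ G.edges) :
    (X t).ncard + S.card ≤ w := by
  obtain ⟨H, hH⟩ := exists_isThreeCenter (Sum.inl '' X t) (G.torso T X t) (Set.toFinite _)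
  have hsub : Sum.inl '' X t ∪ Sum.inr '' (S : Set ι) ⊆ H.verts := by
    rintro _ (hv | ⟨s, hs, rfl⟩)
    · exact inter_verts_subset_of_centerSteps hH.1 ⟨hv, Or.inl hv⟩
    · obtain ⟨u, t', hu, ht', rfl, D, hD, hDX⟩ := hS s hs
      exact hTX.inr_compOf_mem_of_centerSteps hH.1 hu ht' hD hDX
  have hdisj : Disjoint (Sum.inl '' X t) (Sum.inr '' (S : Set ι)) :=
    Set.disjoint_left.2 fun _ ⟨_, _, h⟩ ⟨_, _, h'⟩ => Sum.inl_ne_inr (h.trans h'.symm)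
  calc (X t).ncard + S.card
      = (Sum.inl '' X t ∪ Sum.inr '' (S : Set ι)).ncard := by
        rw [Set.ncard_union_eq hdisj, Set.ncard_image_of_injective _ Sum.inl_injective,
          Set.ncard_image_of_injective _ Sum.inr_injective, Set.ncard_coe_finset]
    _ ≤ H.verts.ncard := Set.ncard_le_ncard hsub
    _ ≤ w := hW.2 t H hH

end MGraph

theorem SimpleGraph.mem_toMGraph_edges {α : Type} [Fintype α] {G : SimpleGraph α} {x y : α} :
    s(x, y) ∈ G.toMGraph.edges ↔ G.Adj x y := by
  simp [SimpleGraph.toMGraph]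

section Branches

variable {n : ℕ} {β ι : Type} (T : SimpleGraph ι) (X : ι → Set (Fin n ⊕ β)) (t : ι)

def bagVerts : Finset (Fin n) :=
  Finset.univ.filter fun a => Sum.inl a ∈ X t

def branchVerts (s : ι) : Finset (Fin n) :=
  Finset.univ.filter fun a => Sum.inl a ∉ X t ∧ compOf T X t (Sum.inl a) = s

def branches : Finset ι :=
  (Finset.univ.filter fun a => Sum.inl a ∉ X t).image fun a => compOf T X t (Sum.inl a)

theorem card_bagVerts_add_sum_card_branchVerts :
    (bagVerts X t).card + ∑ s ∈ branches T X t, (branchVerts T X t s).card = n := by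
  have hfib : ∀ s, branchVerts T X t s =
      (Finset.univ.filter fun a => Sum.inl a ∉ X t).filter fun a => compOf T X t (Sum.inl a) = s :=
    fun s => by rw [Finset.filter_filter]; rfl
  simp only [hfib, branches]
  rw [← Finset.card_eq_sum_card_image, bagVerts, Finset.card_filter_add_card_filter_not,
    Finset.card_univ, Fintype.card_fin]

theorem mem_branchVerts_compOf {a : Fin n} (ha : a ∉ bagVerts X t) :
    a ∈ branchVerts T X t (compOf T X t (Sum.inl a)) := by
  simp_all [bagVerts, branchVerts]

theorem disjoint_branchVerts {s₁ s₂ : ι} (hne : s₁ ≠ s₂) :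
    Disjoint (branchVerts T X t s₁) (branchVerts T X t s₂) :=
  Finset.disjoint_filter.2 fun _ _ h₁ h₂ => hne (h₁.2.symm.trans h₂.2)

theorem branchVerts_union_eq_univ {s₁ s₂ : ι} (hP : bagVerts X t = ∅)
    (hS : branches T X t = {s₁, s₂}) :
    branchVerts T X t s₁ ∪ branchVerts T X t s₂ = Finset.univ := by
  refine Finset.eq_univ_of_forall fun a => ?_
  have ha : a ∉ bagVerts X t := hP ▸ Finset.notMem_empty a
  have hc : compOf T X t (.inl a) ∈ branches T X t :=
    Finset.mem_image_of_mem _ (by simpa [bagVerts] using ha)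
  rw [hS, Finset.mem_insert, Finset.mem_singleton] at hc
  rcases hc with hc | hc
  · exact Finset.mem_union_left _ (hc ▸ mem_branchVerts_compOf T X t ha)
  · exact Finset.mem_union_right _ (hc ▸ mem_branchVerts_compOf T X t ha)

end Branches

section BranchesDecomposition

variable {n : ℕ} {β ι : Type} {T : SimpleGraph ι} {X : ι → Set (Fin n ⊕ β)}
  {G : MGraph (Fin n ⊕ β)}

theorem MGraph.IsTCD.inl_mem_edgeSide_of_mem_branchVerts (hTX : IsTCD G T X)
    (hverts : G.verts = Set.univ) {t₀ s : ι} {a : Fin n} (ha : a ∈ branchVerts T X t₀ s) :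
    (.inl a : Fin n ⊕ β) ∈ edgeSide T X s t₀ := by
  simp only [branchVerts, Finset.mem_filter, Finset.mem_univ, true_and] at ha
  obtain ⟨t', ht'⟩ := hTX.exists_mem (v := .inl a) (hverts ▸ trivial)
  have hra := (hTX.compOf_spec ht' fun (h : t' = t₀) => ha.1 (h ▸ ht')).2
  rw [ha.2] at hra
  exact hra.mem_edgeSide ht'

theorem MGraph.IsTCD.inl_mem_edgeSide_of_not_mem_bagVerts (hTX : IsTCD G T X)
    (hverts : G.verts = Set.univ) {t₀ s : ι} {b : Fin n} (hb : b ∉ bagVerts X t₀)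
    (hbs : compOf T X t₀ (.inl b) ≠ s) : (.inl b : Fin n ⊕ β) ∈ edgeSide T X t₀ s := by
  simp only [bagVerts, Finset.mem_filter, Finset.mem_univ, true_and] at hb
  obtain ⟨t', ht'⟩ := hTX.exists_mem (v := .inl b) (hverts ▸ trivial)
  obtain ⟨hadj, hra⟩ := hTX.compOf_spec ht' fun (h : t' = t₀) => hb (h ▸ ht')
  exact hra.mem_edgeSide_of_ne hadj hbs ht'

theorem MGraph.IsTCD.adj_of_mem_branches (hTX : IsTCD G T X)
    (hverts : G.verts = Set.univ) {t s : ι} (hs : s ∈ branches T X t) : T.Adj t s := by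
  simp only [branches, Finset.mem_image, Finset.mem_filter, Finset.mem_univ, true_and] at hs
  obtain ⟨a, ha, rfl⟩ := hs
  obtain ⟨t', ht'⟩ := hTX.exists_mem (v := .inl a) (hverts ▸ trivial)
  exact (hTX.compOf_spec ht' fun (h : t' = t) => ha (h ▸ ht')).1

end BranchesDecomposition

theorem eq_zero_and_exists_pair_of_add_sum_eq {ι : Type} {S : Finset ι} {g : ι → ℕ} {p m : ℕ}
    (hm : 2 ≤ m) (hS : p + S.card ≤ 2) (hsum : p + ∑ s ∈ S, g s = m + m)
    (hg : ∀ s ∈ S, g s ≤ m) : p = 0 ∧ ∃ s₁ s₂, s₁ ≠ s₂ ∧ S = {s₁, s₂} ∧ g s₁ = m ∧ g s₂ = m := by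
  have hle : ∑ s ∈ S, g s ≤ S.card * m := Finset.sum_le_card_nsmul _ _ _ hg
  have hcard : S.card = 2 := by
    have : S.card ≤ 2 := by omega
    interval_cases h : S.card <;> omega
  obtain ⟨s₁, s₂, hne, rfl⟩ := Finset.card_eq_two.1 hcard
  rw [Finset.sum_pair hne] at hsum
  have h₁ := hg s₁ (by simp)
  have h₂ := hg s₂ (by simp)
  exact ⟨by omega, s₁, s₂, hne, rfl, by omega, by omega⟩

section Reduction

variable {n N : ℕ} {G : SimpleGraph (Fin n)} {f : Fin n → Finset (Fin (N - 2))}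
  {ι : Type} {T : SimpleGraph ι} {X : ι → Set (BisV n N)}

@[simp]
theorem bisectG_adj_inl_inl {a b : Fin n} :
    (bisectG G N f).Adj (.inl a) (.inl b) ↔ G.Adj a b := by
  rw [bisectG, SimpleGraph.fromRel_adj]
  exact ⟨fun h => h.2.elim id .symm, fun h => ⟨fun he => h.ne (Sum.inl_injective he), .inl h⟩⟩

@[simp]
theorem bisectG_adj_inl_inr_inl {a : Fin n} {q : Fin (N - 2)} :
    (bisectG G N f).Adj (.inl a) (.inr (.inl q)) ↔ q ∈ f a := by
  simp [bisectG, bisectR, SimpleGraph.fromRel_adj]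

theorem bisectG_exists_commonNbrs {q q' : Fin (N - 2)} (hne : q ≠ q') :
    ∃ C : Finset (BisV n N), C.card = N + 1 ∧ ∀ c ∈ C,
      (bisectG G N f).Adj (.inr (.inl q)) c ∧ (bisectG G N f).Adj c (.inr (.inl q')) := by
  wlog hlt : q < q' generalizing q q'
  · obtain ⟨C, hC, hadj⟩ := this hne.symm (lt_of_le_of_ne (not_lt.1 hlt) hne.symm)
    exact ⟨C, hC, fun c hc => ⟨(hadj c hc).2.symm, (hadj c hc).1.symm⟩⟩
  let c : Fin (N + 1) → BisV n N := fun i => .inr (.inr (⟨(q, q'), hlt⟩, i))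
  refine ⟨Finset.univ.image c, ?_, ?_⟩
  · rw [Finset.card_image_of_injective _ fun i j h => by simpa [c] using h, Finset.card_fin]
  · simp [c, bisectG, bisectR, SimpleGraph.fromRel_adj]

theorem bisectG_mem_bag_of_mem_bag (hTX : IsTCD (bisectG G N f).toMGraph T X)
    (hadh : ∀ a b, T.Adj a b → Multiset.card ((bisectG G N f).toMGraph.adhesion T X a b) ≤ N)
    {t : ι} {q : Fin (N - 2)} (hq : (.inr (.inl q) : BisV n N) ∈ X t) (q' : Fin (N - 2)) :
    (.inr (.inl q') : BisV n N) ∈ X t := by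
  rcases eq_or_ne q q' with rfl | hne
  · exact hq
  obtain ⟨C, hC, hadj⟩ := bisectG_exists_commonNbrs (G := G) (f := f) hne
  refine hTX.mem_of_commonNbrs hadh (by omega) (fun h => (hadj _ h).1.ne rfl)
    (fun h => (hadj _ h).2.ne rfl) (fun c hc => ⟨trivial, ?_, ?_⟩) hq trivial
  · exact SimpleGraph.mem_toMGraph_edges.2 (hadj c hc).1
  · exact SimpleGraph.mem_toMGraph_edges.2 (hadj c hc).2

theorem bisectG_card_bagVerts_add_card_branches_le [Finite ι]
    (hTX : IsTCD (bisectG G N f).toMGraph T X) (hW : WidthLE (bisectG G N f).toMGraph T X N)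
    {t₀ : ι} (hQ : ∀ q, (.inr (.inl q) : BisV n N) ∈ X t₀) (hf : ∀ a, 3 ≤ (f a).card) :
    (bagVerts X t₀).card + (branches T X t₀).card ≤ 2 := by
  have hQP : N - 2 + (bagVerts X t₀).card ≤ (X t₀).ncard := by
    have hdisj : Disjoint (Set.range fun q => (.inr (.inl q) : BisV n N))
        (Sum.inl '' (bagVerts X t₀ : Set (Fin n))) := by
      simp [Set.disjoint_left]
    calc N - 2 + (bagVerts X t₀).card
        = (Set.range (fun q => (.inr (.inl q) : BisV n N)) ∪
            Sum.inl '' (bagVerts X t₀ : Set (Fin n))).ncard := by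
          rw [Set.ncard_union_eq hdisj, Set.ncard_range_of_injective (by intro _ _ _; simp_all),
            Set.ncard_image_of_injective _ Sum.inl_injective, Set.ncard_coe_finset, Nat.card_fin]
      _ ≤ (X t₀).ncard := Set.ncard_le_ncard <| Set.union_subset (Set.range_subset_iff.2 hQ)
          (by simp [bagVerts, Set.subset_def])
  have := hTX.ncard_add_card_le hW t₀ (S := branches T X t₀) ?_
  · omega
  simp only [branches, Finset.mem_image, Finset.mem_filter, Finset.mem_univ, true_and,
    forall_exists_index, and_imp]
  rintro _ a ha rfl
  obtain ⟨t', ht'⟩ := hTX.exists_mem (v := .inl a) trivial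
  refine ⟨_, t', ht', fun h => ha (h ▸ ht'), rfl, (f a).image fun q => .inr (.inl q), ?_, ?_⟩
  · rw [Finset.card_image_of_injective _ (by intro _ _ _; simp_all)]
    exact hf a
  · simp [hQ, SimpleGraph.mem_toMGraph_edges]

/-- The adhesion of the tree edge `t₀ s` contains the `d` edges from each vertex of the branch at
`s` into `Q ⊆ X t₀`, and its edges to `B`, which lies on the `t₀`-side. -/
theorem bisectG_card_branchVerts_mul_add_le (hTX : IsTCD (bisectG G N f).toMGraph T X)
    (hadh : ∀ a b, T.Adj a b → Multiset.card ((bisectG G N f).toMGraph.adhesion T X a b) ≤ N)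
    {t₀ : ι} (hQ : ∀ q, (.inr (.inl q) : BisV n N) ∈ X t₀) {d : ℕ} (hf : ∀ a, (f a).card = d)
    {s : ι} (hs : T.Adj t₀ s) {B : Finset (Fin n)}
    (hB : ∀ b ∈ B, b ∉ bagVerts X t₀ ∧ compOf T X t₀ (.inl b) ≠ s) :
    (branchVerts T X t₀ s).card * d +
      ((branchVerts T X t₀ s ×ˢ B).filter fun p => G.Adj p.1 p.2).card ≤ N := by
  set A := branchVerts T X t₀ s
  set P := (A ×ˢ B).filter fun p => G.Adj p.1 p.2
  let eQ : (Σ _ : Fin n, Fin (N - 2)) → Sym2 (BisV n N) := fun p => s(.inr (.inl p.2), .inl p.1)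
  let eV : Fin n × Fin n → Sym2 (BisV n N) := fun p => s(.inl p.2, .inl p.1)
  have hQcard : ((A.sigma f).image eQ).card = A.card * d := by
    rw [Finset.card_image_of_injective _ (by rintro ⟨a, q⟩ ⟨a', q'⟩ h; simp_all [eQ]),
      Finset.card_sigma, Finset.sum_const_nat fun a _ => hf a]
  have hmemP : ∀ p ∈ P, p.1 ∈ A ∧ p.2 ∈ B ∧ G.Adj p.1 p.2 := fun p hp => by
    simpa [P, and_assoc] using hp
  have hVcard : (P.image eV).card = P.card := by
    refine Finset.card_image_of_injOn fun p hp p' hp' h => ?_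
    rcases Sym2.eq_iff.1 h with ⟨h2, h1⟩ | ⟨h2, -⟩
    · exact Prod.ext (Sum.inl_injective h1) (Sum.inl_injective h2)
    · have ha := hmemP p' hp'
      simp only [A, branchVerts, Finset.mem_filter] at ha
      exact absurd ha.1.2.2 ((Sum.inl_injective h2) ▸ (hB _ (hmemP p hp).2.1).2)
  have hdisj : Disjoint ((A.sigma f).image eQ) (P.image eV) := by
    simp only [Finset.disjoint_left, Finset.mem_image, not_exists, not_and, forall_exists_index,
      and_imp]
    rintro _ ⟨a, q⟩ - rfl ⟨b, c⟩ - h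
    simp [eQ, eV] at h
  have := card_le_card_adhesion (bisectG G N f).toMGraph T X (a := t₀) (b := s)
    (F := (A.sigma f).image eQ ∪ P.image eV) ?_
  · rw [Finset.card_union_of_disjoint hdisj, hQcard, hVcard] at this
    exact this.trans (hadh _ _ hs)
  simp only [Finset.mem_union, Finset.mem_image, Finset.mem_sigma]
  rintro _ (⟨⟨a, q⟩, ⟨ha, hq⟩, rfl⟩ | ⟨p, hp, rfl⟩)
  · refine ⟨SimpleGraph.mem_toMGraph_edges.2 ?_, _, mem_edgeSide_of_mem (hQ q) s, _,
      hTX.inl_mem_edgeSide_of_mem_branchVerts rfl ha, rfl⟩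
    exact (bisectG_adj_inl_inr_inl.2 hq).symm
  · obtain ⟨ha, hb, hab⟩ := hmemP p hp
    refine ⟨SimpleGraph.mem_toMGraph_edges.2 (bisectG_adj_inl_inl.2 hab.symm), _,
      hTX.inl_mem_edgeSide_of_not_mem_bagVerts rfl (hB _ hb).1 (hB _ hb).2, _,
      hTX.inl_mem_edgeSide_of_mem_branchVerts rfl ha, rfl⟩

theorem bisectG_exists_bisection [Finite ι] {m k : ℕ} (hn : n = m + m) (hN : N = 4 * m ^ 3 + k)
    (hk : k < m ^ 2) (hf : ∀ a, (f a).card = n ^ 2)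
    (hTX : IsTCD (bisectG G N f).toMGraph T X) (hW : WidthLE (bisectG G N f).toMGraph T X N) :
    ∃ V₁ V₂ : Finset (Fin n), Disjoint V₁ V₂ ∧ V₁ ∪ V₂ = Finset.univ ∧
      V₁.card = m ∧ V₂.card = m ∧ ((V₁ ×ˢ V₂).filter fun p => G.Adj p.1 p.2).card ≤ k := by
  have hd : n ^ 2 = 4 * m ^ 2 := by subst hn; ring
  have hm : 2 ≤ m := by
    have hm0 : 0 < m := Nat.pos_of_ne_zero (by rintro rfl; simp at hk)
    have := (hf ⟨0, by omega⟩).symm.trans_le (Finset.card_le_univ _)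
    rw [Fintype.card_fin, hd] at this
    by_contra
    interval_cases m
    omega
  obtain ⟨t₀, hQ⟩ : ∃ t₀, ∀ q, (.inr (.inl q) : BisV n N) ∈ X t₀ := by
    have hQ0 : 0 < N - 2 := by have := Nat.pow_le_pow_left hm 3; omega
    obtain ⟨t₀, h⟩ := hTX.exists_mem (v := .inr (.inl ⟨0, hQ0⟩)) trivial
    exact ⟨t₀, bisectG_mem_bag_of_mem_bag hTX hW.1 h⟩
  have hbranch : ∀ s ∈ branches T X t₀, (branchVerts T X t₀ s).card ≤ m := by
    intro s hs
    have := bisectG_card_branchVerts_mul_add_le hTX hW.1 hQ hf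
      (hTX.adj_of_mem_branches rfl hs) (B := ∅) (by simp)
    rw [Finset.product_empty, Finset.filter_empty, Finset.card_empty, hd] at this
    nlinarith
  obtain ⟨hP, s₁, s₂, hne, hS, h₁, h₂⟩ := eq_zero_and_exists_pair_of_add_sum_eq hm
    (bisectG_card_bagVerts_add_card_branches_le hTX hW hQ fun a => by rw [hf, hd]; nlinarith)
    (hn ▸ card_bagVerts_add_sum_card_branchVerts T X t₀) hbranch
  refine ⟨branchVerts T X t₀ s₁, branchVerts T X t₀ s₂, disjoint_branchVerts T X t₀ hne,
    branchVerts_union_eq_univ T X t₀ (Finset.card_eq_zero.1 hP) hS, h₁, h₂, ?_⟩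
  have hB : ∀ b ∈ branchVerts T X t₀ s₂, b ∉ bagVerts X t₀ ∧ compOf T X t₀ (.inl b) ≠ s₁ := by
    simp only [branchVerts, bagVerts, Finset.mem_filter, Finset.mem_univ, true_and]
    exact fun b hb => ⟨hb.1, hb.2 ▸ hne.symm⟩
  have := bisectG_card_branchVerts_mul_add_le hTX hW.1 hQ hf
    (hTX.adj_of_mem_branches rfl (s := s₁) (by simp [hS])) hB
  rw [h₁, hd, show m * (4 * m ^ 2) = 4 * m ^ 3 by ring] at this
  omega

end Reduction

theorem exists_bisection_of_sq_le {m k : ℕ} (G : SimpleGraph (Fin (m + m))) (hk : m ^ 2 ≤ k) :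
    ∃ V₁ V₂ : Finset (Fin (m + m)), Disjoint V₁ V₂ ∧ V₁ ∪ V₂ = Finset.univ ∧
      V₁.card = m ∧ V₂.card = m ∧ ((V₁ ×ˢ V₂).filter fun p => G.Adj p.1 p.2).card ≤ k := by
  obtain ⟨V₁, -, h₁⟩ := Finset.exists_subset_card_eq
    (s := (Finset.univ : Finset (Fin (m + m)))) (n := m) (by simp)
  have h₂ : V₁ᶜ.card = m := by rw [Finset.card_compl, h₁, Fintype.card_fin]; omega
  refine ⟨V₁, V₁ᶜ, disjoint_compl_right, by simp, h₁, h₂, ?_⟩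
  calc _ ≤ (V₁ ×ˢ V₁ᶜ).card := Finset.card_filter_le _ _
    _ ≤ k := by rw [Finset.card_product, h₁, h₂, ← sq]; exact hk

theorem tcw_to_bisection_general (n k : ℕ) (hn : Even n)
    (G : SimpleGraph (Fin n))
    (f : Fin n → Finset (Fin (bisectW n k - 2))) (hf : ∀ a, (f a).card = n ^ 2)
    (htcw : tcw (bisectG G (bisectW n k) f).toMGraph ≤ bisectW n k) :
    ∃ V₁ V₂ : Finset (Fin n), Disjoint V₁ V₂ ∧ V₁ ∪ V₂ = Finset.univ ∧
      V₁.card = n / 2 ∧ V₂.card = n / 2 ∧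
      ((V₁ ×ˢ V₂).filter fun p => G.Adj p.1 p.2).card ≤ k := by
  obtain ⟨m, rfl⟩ := hn
  rw [show (m + m) / 2 = m by omega]
  rcases le_or_gt (m ^ 2) k with hk | hk
  · exact exists_bisection_of_sq_le G hk
  have hW : bisectW (m + m) k = 4 * m ^ 3 + k := by
    rw [bisectW, show (m + m) ^ 3 = 2 * (4 * m ^ 3) by ring, Nat.mul_div_cancel_left _ two_pos]
  obtain ⟨ι, _, T, X, hTX, hwidth⟩ := tcwLE_of_tcw_le (Set.toFinite _) htcw
  exact bisectG_exists_bisection rfl hW hk hf hTX hwidth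

theorem tcw_to_bisection (n k : ℕ) (hn : Even n) (hk : k ≤ n ^ 2)
    (G : SimpleGraph (Fin n))
    (f : Fin n → Finset (Fin (bisectW n k - 2))) (hf : ∀ a, (f a).card = n ^ 2)
    (htcw : tcw (bisectG G (bisectW n k) f).toMGraph ≤ bisectW n k) :
    ∃ V₁ V₂ : Finset (Fin n), Disjoint V₁ V₂ ∧ V₁ ∪ V₂ = Finset.univ ∧
      V₁.card = n / 2 ∧ V₂.card = n / 2 ∧
      ((V₁ ×ˢ V₂).filter fun p => G.Adj p.1 p.2).card ≤ k :=
  tcw_to_bisection_general n k hn G f hf htcw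

end
end
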